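/- arXiv:2505.15763 — 3 statements merged into one kernel-verified Lean document; each statement's English description precedes it below -/
import Mathlib

section
/- Under Assumptions 1 and 2, if the number N of observations used to estimate each density satisfies N ≥ c·T^{1/r} for some constant c > 0, then the sample mean f̄ = T^{-1}∑_{t=1}^T f̂_t satisfies E‖f̄ − Ef‖² = O(T^{-1}) as T → ∞. -/
open MeasureTheory ProbabilityTheory Filter Asymptotics
open scoped RealInnerProductSpace NNReal


-- partial sums of ‖A^n‖ are uniformly bounded when ‖A^k‖ < 1 for some k ≥ 1
lemma aux_pow_norm_sum_bound {H : Type*} [NormedAddCommGroup H] [InnerProductSpace ℝ H]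
    (A : H →L[ℝ] H) (k : ℕ) (hk : 1 ≤ k) (hA : ‖A ^ k‖ < 1) :
    ∃ B : ℝ, 0 ≤ B ∧ ∀ m : ℕ, ∑ n ∈ Finset.range m, ‖A ^ n‖ ≤ B := by
  set a : ℝ := ‖A ^ k‖ with ha_def
  have ha0 : 0 ≤ a := norm_nonneg _
  set C : ℝ := ∑ s ∈ Finset.range k, ‖A ^ s‖ with hC_def
  have hC0 : 0 ≤ C := Finset.sum_nonneg fun _ _ => norm_nonneg _
  have hCn : ∀ s, s < k → ‖A ^ s‖ ≤ C := fun s hs =>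
    Finset.single_le_sum (fun _ _ => norm_nonneg _) (Finset.mem_range.mpr hs)
  -- key: ‖A ^ n‖ ≤ C * a ^ (n / k)
  have key : ∀ n : ℕ, ‖A ^ n‖ ≤ C * a ^ (n / k) := by
    intro n
    induction n using Nat.strong_induction_on with
    | _ n ih =>
      by_cases hn : n < k
      · rw [Nat.div_eq_of_lt hn, pow_zero, mul_one]
        exact hCn n hn
      · push_neg at hn
        have h1 : n - k < n := Nat.sub_lt (lt_of_lt_of_le (Nat.lt_of_lt_of_le Nat.zero_lt_one hk) hn) (Nat.lt_of_lt_of_le Nat.zero_lt_one hk)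
        have h2 : A ^ n = A ^ k * A ^ (n - k) := by
          rw [← pow_add, Nat.add_sub_cancel' hn]
        calc ‖A ^ n‖ ≤ ‖A ^ k‖ * ‖A ^ (n - k)‖ := by rw [h2]; exact norm_mul_le _ _
          _ ≤ a * (C * a ^ ((n - k) / k)) := by
              exact mul_le_mul_of_nonneg_left (ih _ h1) ha0
          _ = C * a ^ ((n - k) / k + 1) := by ring
          _ = C * a ^ (n / k) := by
              congr 2
              exact (Nat.div_eq_sub_div hk hn).symm
  have h1a : 0 < 1 - a := by linarith
  have hgeom : ∀ m : ℕ, ∑ q ∈ Finset.range m, a ^ q ≤ (1 - a)⁻¹ := by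
    intro m
    rw [geom_sum_eq (by linarith : a ≠ 1)]
    rw [show (a ^ m - 1) / (a - 1) = (1 - a ^ m) / (1 - a) by
      rw [← neg_div_neg_eq]; ring_nf]
    rw [div_le_iff₀ h1a, inv_mul_cancel₀ (ne_of_gt h1a)]
    have : (0:ℝ) ≤ a ^ m := pow_nonneg ha0 m
    linarith
  have hblock : ∀ m : ℕ, ∑ n ∈ Finset.range (k * m), a ^ (n / k)
      = (k : ℝ) * ∑ q ∈ Finset.range m, a ^ q := by
    intro m
    induction m with
    | zero => simp
    | succ m ih =>
      rw [Finset.range_eq_Ico, ← Finset.sum_Ico_consecutive _ (Nat.zero_le (k*m))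
        (Nat.mul_le_mul_left k (Nat.le_succ m)), ← Finset.range_eq_Ico, ih]
      have hconst : ∑ n ∈ Finset.Ico (k*m) (k*(m+1)), a ^ (n / k) = (k:ℝ) * a ^ m := by
        rw [Finset.sum_congr rfl (fun n hn => ?_), Finset.sum_const, Nat.card_Ico]
        · rw [nsmul_eq_mul]
          congr 1
          exact Nat.cast_inj.mpr (by rw [Nat.mul_succ]; omega)
        · rw [Finset.mem_Ico] at hn
          congr 1
          refine Nat.div_eq_of_lt_le ?_ ?_
          · rw [Nat.mul_comm]; exact hn.1
          · rw [Nat.mul_comm]; exact hn.2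
      rw [hconst, Finset.sum_range_succ]
      ring
  refine ⟨C * ((k : ℝ) * (1 - a)⁻¹), mul_nonneg hC0 (mul_nonneg (Nat.cast_nonneg k)
    (inv_nonneg.mpr h1a.le)), fun m => ?_⟩
  calc ∑ n ∈ Finset.range m, ‖A ^ n‖ ≤ ∑ n ∈ Finset.range m, C * a ^ (n / k) :=
        Finset.sum_le_sum fun n _ => key n
    _ ≤ ∑ n ∈ Finset.range (k * m), C * a ^ (n / k) := by
        refine Finset.sum_le_sum_of_subset_of_nonneg ?_
          (fun n _ _ => mul_nonneg hC0 (pow_nonneg ha0 _))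
        exact Finset.range_subset_range.mpr (Nat.le_mul_of_pos_left m hk)
    _ = C * ((k:ℝ) * ∑ q ∈ Finset.range m, a ^ q) := by
        rw [← Finset.mul_sum, hblock m]
    _ ≤ C * ((k : ℝ) * (1 - a)⁻¹) := by
        refine mul_le_mul_of_nonneg_left (mul_le_mul_of_nonneg_left (hgeom m) (by positivity)) hC0

-- E⟪X, Y⟫ = 0 for independent bounded X, Y with E Y = 0
lemma aux_indep_inner_zero {H : Type*} [NormedAddCommGroup H] [InnerProductSpace ℝ H]
    [CompleteSpace H] [SecondCountableTopology H] [MeasurableSpace H] [BorelSpace H]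
    {Ω : Type*} [MeasurableSpace Ω] (μ : Measure Ω) [IsProbabilityMeasure μ]
    (X Y : Ω → H) (hX : Measurable X) (hY : Measurable Y)
    (CX CY : ℝ) (hbX : ∀ᵐ ω ∂μ, ‖X ω‖ ≤ CX) (hbY : ∀ᵐ ω ∂μ, ‖Y ω‖ ≤ CY)
    (hind : IndepFun X Y μ) (hY0 : ∫ ω, Y ω ∂μ = 0) :
    ∫ ω, ⟪X ω, Y ω⟫ ∂μ = 0 := by
  have hmapX : IsProbabilityMeasure (μ.map X) := Measure.isProbabilityMeasure_map hX.aemeasurable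
  have hmapY : IsProbabilityMeasure (μ.map Y) := Measure.isProbabilityMeasure_map hY.aemeasurable
  -- integrability of norms under the map measures
  have hiX : Integrable (fun x : H => x) (μ.map X) := by
    refine (integrable_map_measure aestronglyMeasurable_id hX.aemeasurable).mpr ?_
    exact Integrable.mono' (integrable_const CX) hX.aestronglyMeasurable hbX
  have hiY : Integrable (fun y : H => y) (μ.map Y) := by
    refine (integrable_map_measure aestronglyMeasurable_id hY.aemeasurable).mpr ?_
    exact Integrable.mono' (integrable_const CY) hY.aestronglyMeasurable hbY
  have hprod := (indepFun_iff_map_prod_eq_prod_map_map hX.aemeasurable hY.aemeasurable).mp hind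
  have hmeas_inner : Measurable (fun p : H × H => ⟪p.1, p.2⟫) :=
    (continuous_inner (𝕜 := ℝ) (E := H)).measurable
  have hint_prod : Integrable (fun p : H × H => ⟪p.1, p.2⟫) ((μ.map X).prod (μ.map Y)) := by
    refine Integrable.mono' (Integrable.mul_prod hiX.norm hiY.norm)
      hmeas_inner.aestronglyMeasurable ?_
    filter_upwards with p
    simpa [norm_norm] using norm_inner_le_norm (𝕜 := ℝ) p.1 p.2
  calc ∫ ω, ⟪X ω, Y ω⟫ ∂μ
      = ∫ p : H × H, ⟪p.1, p.2⟫ ∂(μ.map (fun ω => (X ω, Y ω))) := by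
        rw [integral_map (hX.prodMk hY).aemeasurable hmeas_inner.aestronglyMeasurable]
    _ = ∫ p : H × H, ⟪p.1, p.2⟫ ∂((μ.map X).prod (μ.map Y)) := by rw [hprod]
    _ = ∫ x, ∫ y, ⟪x, y⟫ ∂(μ.map Y) ∂(μ.map X) := integral_prod _ hint_prod
    _ = ∫ x, ⟪x, ∫ y, y ∂(μ.map Y)⟫ ∂(μ.map X) := by
        refine integral_congr_ae (Filter.Eventually.of_forall fun x => ?_)
        exact integral_inner hiY x
    _ = 0 := by
        have : ∫ y, y ∂(μ.map Y) = 0 := by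
          have h2 : ∫ y, y ∂(μ.map Y) = ∫ ω, Y ω ∂μ :=
            integral_map hY.aemeasurable aestronglyMeasurable_id
          rw [h2]; exact hY0
        simp [this]

private lemma aux_alg (x a b : ℝ) (hx : x ≠ 0) :
    (x⁻¹) ^ 2 * (2 * (a * x) + 2 * (x * (x * (b * x⁻¹)))) = (2 * a + 2 * b) * x⁻¹ := by
  field_simp

/-- **Lemma 1, part 1** (Horta–Park–Qian style FAR of densities):
Under Assumptions 1 and 2, if the number `N` of observations used to estimate each curve
satisfies `N T ≥ c·T^(1/r)`, then the sample mean `f̄ = T⁻¹ ∑_{t=1}^T f̂_t` satisfies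
`E‖f̄ − Ef‖² = O(T⁻¹)` as `T → ∞`. -/
theorem stmt_0
    {H : Type*} [NormedAddCommGroup H] [InnerProductSpace ℝ H] [CompleteSpace H]
    [SecondCountableTopology H] [MeasurableSpace H] [BorelSpace H]
    {Ω : Type*} [MeasurableSpace Ω] (μ : Measure Ω) [IsProbabilityMeasure μ]
    -- the state curves, their common mean, the demeaned process and the innovations
    (f w ε : ℕ → Ω → H) (Ef : H)
    (hw_meas : ∀ t, Measurable (w t)) (hε_meas : ∀ t, Measurable (ε t))
    (hmean : ∀ t, ∫ ω, f t ω ∂μ = Ef)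
    (hfw : ∀ t ω, f t ω = Ef + w t ω)
    -- Assumption 1(a): FAR(1) model with compact `A`, `‖A^k‖ < 1` for some `k ≥ 1`
    (A : H →L[ℝ] H) (hA_cpt : IsCompactOperator fun x => A x)
    (hA_pow : ∃ k : ℕ, 1 ≤ k ∧ ‖A ^ k‖ < 1)
    (hmodel : ∀ t : ℕ, ∀ᵐ ω ∂μ, w (t + 1) ω = A (w t ω) + ε (t + 1) ω)
    -- Assumption 1(b): `(ε_t)` i.i.d., mean zero, `E‖ε_t‖⁴ < ∞`, independent of `w₀`
    (hε_indep : iIndepFun ε μ)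
    (hε_ident : ∀ t, μ.map (ε t) = μ.map (ε 1))
    (hε_mean : ∀ t, ∫ ω, ε t ω ∂μ = 0)
    (hε_mom4 : ∀ t, Integrable (fun ω => ‖ε t ω‖ ^ 4) μ)
    (hε_w0 : ∀ t, 1 ≤ t → IndepFun (w 0) (ε t) μ)
    -- `(w_t)` is the stationary solution
    (hstat : μ.map (fun ω => fun i : ℕ => w (i + 1) ω)
        = μ.map (fun ω => fun i : ℕ => w i ω))
    -- Assumption 2(a): the covariance operator `Q` has eigenvalues `λ₁ ≥ λ₂ ≥ ⋯ > 0`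
    (Q : H →L[ℝ] H)
    (hQ : ∀ u x : H, ⟪u, Q x⟫ = ∫ ω, ⟪u, w 1 ω⟫ * ⟪x, w 1 ω⟫ ∂μ)
    (lam : ℕ → ℝ) (v : ℕ → H) (hv : Orthonormal ℝ v)
    (hlam_anti : Antitone lam) (hlam_pos : ∀ k, 0 < lam k)
    (hQ_rep : ∀ x : H, Q x = ∑' k, lam k • (⟪v k, x⟫ • v k))
    -- the estimated curves: `fhat n t` is the estimator of `f t` based on `n` observations
    (r : ℝ) (hr : 0 < r)
    (fhat : ℕ → ℕ → Ω → H) (hfhat_meas : ∀ n t, Measurable (fhat n t))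
    -- Assumption 2(b): `‖f_t‖, ‖Δ_t‖ ≤ M` a.s.
    (M : ℝ) (hM : 0 < M)
    (hf_bdd : ∀ t, ∀ᵐ ω ∂μ, ‖f t ω‖ ≤ M)
    (hΔ_bdd : ∀ n t, ∀ᵐ ω ∂μ, ‖fhat n t ω - f t ω‖ ≤ M)
    -- Assumption 2(c): `sup_t E‖Δ_t‖² = O(N^{-r})`
    (CΔ : ℝ) (hCΔ : 0 < CΔ)
    (hΔ_mse : ∀ n : ℕ, 1 ≤ n → ∀ t, ∫ ω, ‖fhat n t ω - f t ω‖ ^ 2 ∂μ ≤ CΔ * (n : ℝ) ^ (-r))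
    -- sampling scheme: `N T ≥ c·T^(1/r)`
    (N : ℕ → ℕ) (c : ℝ) (hc : 0 < c)
    (hN : ∀ T : ℕ, 1 ≤ T → c * (T : ℝ) ^ (1 / r) ≤ (N T : ℝ)) :
    (fun T : ℕ =>
        ∫ ω, ‖((T : ℝ)⁻¹ • ∑ t ∈ Finset.Icc 1 T, fhat (N T) t ω) - Ef‖ ^ 2 ∂μ)
      =O[atTop] fun T : ℕ => (T : ℝ)⁻¹ := by
  classical
  obtain ⟨k, hk, hAk⟩ := hA_pow
  obtain ⟨B, hB0, hB⟩ := aux_pow_norm_sum_bound A k hk hAk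
  -- measurability of f
  have hf_meas : ∀ t, Measurable (f t) := by
    intro t
    have : f t = fun ω => Ef + w t ω := funext fun ω => hfw t ω
    rw [this]
    exact measurable_const.add (hw_meas t)
  -- integrability helpers
  have hintH : ∀ (g : Ω → H), Measurable g → ∀ C : ℝ, (∀ᵐ ω ∂μ, ‖g ω‖ ≤ C) →
      Integrable g μ := fun g hg C hb =>
    Integrable.mono' (integrable_const C) hg.aestronglyMeasurable hb
  have hintR : ∀ (g : Ω → ℝ), Measurable g → ∀ C : ℝ, (∀ᵐ ω ∂μ, |g ω| ≤ C) →
      Integrable g μ := fun g hg C hb =>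
    Integrable.mono' (integrable_const C) hg.aestronglyMeasurable (by simpa using hb)
  -- ‖Ef‖ ≤ M
  have hEf : ‖Ef‖ ≤ M := by
    rw [← hmean 0]
    refine le_trans (norm_integral_le_integral_norm _) ?_
    calc ∫ ω, ‖f 0 ω‖ ∂μ ≤ ∫ _, M ∂μ := by
          refine integral_mono_ae ((hintH (f 0) (hf_meas 0) M (hf_bdd 0)).norm)
            (integrable_const M) (hf_bdd 0)
      _ = M := by simp
  -- w is bounded by 2M
  have hw_bdd : ∀ t, ∀ᵐ ω ∂μ, ‖w t ω‖ ≤ 2 * M := by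
    intro t
    filter_upwards [hf_bdd t] with ω hω
    have : w t ω = f t ω - Ef := by rw [hfw t ω]; abel
    rw [this]
    calc ‖f t ω - Ef‖ ≤ ‖f t ω‖ + ‖Ef‖ := norm_sub_le _ _
      _ ≤ 2 * M := by linarith
  -- ε is bounded
  set Cε : ℝ := 2 * M + ‖A‖ * (2 * M) with hCε_def
  have hε_bdd : ∀ j, 1 ≤ j → ∀ᵐ ω ∂μ, ‖ε j ω‖ ≤ Cε := by
    intro j hj
    obtain ⟨j', rfl⟩ : ∃ j', j = j' + 1 := ⟨j - 1, by omega⟩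
    filter_upwards [hmodel j', hw_bdd (j' + 1), hw_bdd j'] with ω h1 h2 h3
    have : ε (j' + 1) ω = w (j' + 1) ω - A (w j' ω) := by rw [h1]; abel
    rw [this]
    calc ‖w (j' + 1) ω - A (w j' ω)‖ ≤ ‖w (j' + 1) ω‖ + ‖A (w j' ω)‖ := norm_sub_le _ _
      _ ≤ 2 * M + ‖A‖ * (2 * M) :=
          add_le_add h2 (le_trans (A.le_opNorm _) (by
            exact mul_le_mul_of_nonneg_left h3 (norm_nonneg A)))
  -- ε is integrable with mean zero
  have hε_int : ∀ j, 1 ≤ j → Integrable (ε j) μ :=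
    fun j hj => hintH (ε j) (hε_meas j) Cε (hε_bdd j hj)
  -- representation: w (s+h) = A^h (w s) + ∑_{j=s+1}^{s+h} A^{s+h-j} (ε j)  a.e.
  have hrep : ∀ s h : ℕ, ∀ᵐ ω ∂μ, w (s + h) ω
      = (A ^ h) (w s ω) + ∑ j ∈ Finset.Icc (s + 1) (s + h), (A ^ (s + h - j)) (ε j ω) := by
    intro s h
    induction h with
    | zero =>
      filter_upwards with ω
      simp
    | succ h ih =>
      filter_upwards [ih, hmodel (s + h)] with ω hω hmod
      have e1 : s + (h + 1) = (s + h) + 1 := by omega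
      rw [e1, hmod, hω, map_add, map_sum]
      have e2 : A ((A ^ h) (w s ω)) = (A ^ (h + 1)) (w s ω) := by
        rw [pow_succ']
        rfl
      rw [e2]
      have e3 : ∀ j ∈ Finset.Icc (s + 1) (s + h),
          A ((A ^ (s + h - j)) (ε j ω)) = (A ^ (s + h + 1 - j)) (ε j ω) := by
        intro j hj
        rw [Finset.mem_Icc] at hj
        have : s + h + 1 - j = (s + h - j) + 1 := by omega
        rw [this, pow_succ']
        rfl
      rw [Finset.sum_congr rfl e3]
      have e4 : s + h + 1 = (s + h) + 1 := rfl
      rw [show Finset.Icc (s + 1) (s + h + 1) = insert (s + h + 1) (Finset.Icc (s + 1) (s + h)) from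
        (Finset.insert_Icc_right_eq_Icc_add_one (by omega)).symm]
      rw [Finset.sum_insert (by simp)]
      have e5 : (A ^ (s + h + 1 - (s + h + 1))) (ε (s + h + 1) ω) = ε (s + h + 1) ω := by
        simp
      rw [e5]
      abel
  -- integrability of inner products
  have hinner_int : ∀ (X Y : Ω → H) (CX CY : ℝ), 0 ≤ CX → Measurable X → Measurable Y →
      (∀ᵐ ω ∂μ, ‖X ω‖ ≤ CX) → (∀ᵐ ω ∂μ, ‖Y ω‖ ≤ CY) →
      Integrable (fun ω => ⟪X ω, Y ω⟫) μ := by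
    intro X Y CX CY hCX hX hY hbX hbY
    refine hintR _ (hX.inner hY) (CX * CY) ?_
    filter_upwards [hbX, hbY] with ω h1 h2
    exact le_trans (abs_real_inner_le_norm _ _) (mul_le_mul h1 h2 (norm_nonneg _) hCX)
  -- cross terms vanish
  have hcross : ∀ s j : ℕ, s < j → ∀ (Bop : H →L[ℝ] H),
      ∫ ω, ⟪w s ω, Bop (ε j ω)⟫ ∂μ = 0 := by
    intro s j hsj Bop
    have hj1 : 1 ≤ j := by omega
    have hY0 : ∫ ω, Bop (ε j ω) ∂μ = 0 := by
      rw [ContinuousLinearMap.integral_comp_comm Bop (hε_int j hj1), hε_mean j, map_zero]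
    have hYmeas : Measurable fun ω => Bop (ε j ω) := Bop.continuous.measurable.comp (hε_meas j)
    have hYbdd : ∀ᵐ ω ∂μ, ‖Bop (ε j ω)‖ ≤ ‖Bop‖ * Cε := by
      filter_upwards [hε_bdd j hj1] with ω hω
      exact le_trans (Bop.le_opNorm _) (mul_le_mul_of_nonneg_left hω (norm_nonneg _))
    have hterm0 : ∫ ω, ⟪(A ^ s) (w 0 ω), Bop (ε j ω)⟫ ∂μ = 0 := by
      refine aux_indep_inner_zero μ _ _ ((A ^ s).continuous.measurable.comp (hw_meas 0)) hYmeas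
        (‖A ^ s‖ * (2 * M)) (‖Bop‖ * Cε) ?_ hYbdd ?_ hY0
      · filter_upwards [hw_bdd 0] with ω hω
        exact le_trans ((A ^ s).le_opNorm _) (mul_le_mul_of_nonneg_left hω (norm_nonneg _))
      · exact (hε_w0 j hj1).comp (A ^ s).continuous.measurable Bop.continuous.measurable
    have hterm : ∀ i ∈ Finset.Icc 1 s, ∫ ω, ⟪(A ^ (s - i)) (ε i ω), Bop (ε j ω)⟫ ∂μ = 0 := by
      intro i hi
      rw [Finset.mem_Icc] at hi
      refine aux_indep_inner_zero μ _ _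
        ((A ^ (s - i)).continuous.measurable.comp (hε_meas i)) hYmeas
        (‖A ^ (s - i)‖ * Cε) (‖Bop‖ * Cε) ?_ hYbdd ?_ hY0
      · filter_upwards [hε_bdd i hi.1] with ω hω
        exact le_trans ((A ^ _).le_opNorm _) (mul_le_mul_of_nonneg_left hω (norm_nonneg _))
      · exact (hε_indep.indepFun (show i ≠ j by omega)).comp
          (A ^ (s - i)).continuous.measurable Bop.continuous.measurable
    have hint0 : Integrable (fun ω => ⟪(A ^ s) (w 0 ω), Bop (ε j ω)⟫) μ := by
      refine hinner_int _ _ (‖A ^ s‖ * (2 * M)) (‖Bop‖ * Cε) (by positivity)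
        ((A ^ s).continuous.measurable.comp (hw_meas 0)) hYmeas ?_ hYbdd
      filter_upwards [hw_bdd 0] with ω hω
      exact le_trans ((A ^ s).le_opNorm _) (mul_le_mul_of_nonneg_left hω (norm_nonneg _))
    have hints : ∀ i ∈ Finset.Icc 1 s,
        Integrable (fun ω => ⟪(A ^ (s - i)) (ε i ω), Bop (ε j ω)⟫) μ := by
      intro i hi
      rw [Finset.mem_Icc] at hi
      refine hinner_int _ _ (‖A ^ (s - i)‖ * (2 * M + ‖A‖ * (2 * M))) (‖Bop‖ * Cε)
        (by positivity) ((A ^ (s - i)).continuous.measurable.comp (hε_meas i)) hYmeas ?_ hYbdd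
      filter_upwards [hε_bdd i hi.1] with ω hω
      exact le_trans ((A ^ _).le_opNorm _) (mul_le_mul_of_nonneg_left hω (norm_nonneg _))
    calc ∫ ω, ⟪w s ω, Bop (ε j ω)⟫ ∂μ
        = ∫ ω, (⟪(A ^ s) (w 0 ω), Bop (ε j ω)⟫
            + ∑ i ∈ Finset.Icc 1 s, ⟪(A ^ (s - i)) (ε i ω), Bop (ε j ω)⟫) ∂μ := by
          refine integral_congr_ae ?_
          filter_upwards [hrep 0 s] with ω hω
          rw [show w s ω = (A ^ s) (w 0 ω)
              + ∑ i ∈ Finset.Icc 1 s, (A ^ (s - i)) (ε i ω) from by simpa using hω,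
            inner_add_left, sum_inner]
      _ = (∫ ω, ⟪(A ^ s) (w 0 ω), Bop (ε j ω)⟫ ∂μ)
            + ∑ i ∈ Finset.Icc 1 s, ∫ ω, ⟪(A ^ (s - i)) (ε i ω), Bop (ε j ω)⟫ ∂μ := by
          rw [integral_add hint0 (integrable_finset_sum _ hints), integral_finset_sum _ hints]
      _ = 0 := by rw [hterm0, Finset.sum_congr rfl hterm]; simp
  -- covariance bound
  have hcov : ∀ s t : ℕ, 1 ≤ s → s ≤ t →
      |∫ ω, ⟪w s ω, w t ω⟫ ∂μ| ≤ 4 * M ^ 2 * ‖A ^ (t - s)‖ := by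
    intro s t hs hst
    have hrep' : ∀ᵐ ω ∂μ, w t ω = (A ^ (t - s)) (w s ω)
        + ∑ j ∈ Finset.Icc (s + 1) t, (A ^ (t - j)) (ε j ω) := by
      filter_upwards [hrep s (t - s)] with ω hω
      rwa [show s + (t - s) = t from by omega] at hω
    have hint0 : Integrable (fun ω => ⟪w s ω, (A ^ (t - s)) (w s ω)⟫) μ := by
      refine hinner_int _ _ (2 * M) (‖A ^ (t - s)‖ * (2 * M)) (by positivity)
        (hw_meas s) ((A ^ (t - s)).continuous.measurable.comp (hw_meas s)) (hw_bdd s) ?_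
      filter_upwards [hw_bdd s] with ω hω
      exact le_trans ((A ^ _).le_opNorm _) (mul_le_mul_of_nonneg_left hω (norm_nonneg _))
    have hints : ∀ j ∈ Finset.Icc (s + 1) t,
        Integrable (fun ω => ⟪w s ω, (A ^ (t - j)) (ε j ω)⟫) μ := by
      intro j hj
      rw [Finset.mem_Icc] at hj
      refine hinner_int _ _ (2 * M) (‖A ^ (t - j)‖ * (2 * M + ‖A‖ * (2 * M))) (by positivity)
        (hw_meas s) ((A ^ (t - j)).continuous.measurable.comp (hε_meas j)) (hw_bdd s) ?_
      filter_upwards [hε_bdd j (by omega)] with ω hω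
      exact le_trans ((A ^ _).le_opNorm _) (mul_le_mul_of_nonneg_left hω (norm_nonneg _))
    have heq : ∫ ω, ⟪w s ω, w t ω⟫ ∂μ = ∫ ω, ⟪w s ω, (A ^ (t - s)) (w s ω)⟫ ∂μ := by
      calc ∫ ω, ⟪w s ω, w t ω⟫ ∂μ
          = ∫ ω, (⟪w s ω, (A ^ (t - s)) (w s ω)⟫
              + ∑ j ∈ Finset.Icc (s + 1) t, ⟪w s ω, (A ^ (t - j)) (ε j ω)⟫) ∂μ := by
            refine integral_congr_ae ?_
            filter_upwards [hrep'] with ω hω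
            rw [hω, inner_add_right, inner_sum]
        _ = (∫ ω, ⟪w s ω, (A ^ (t - s)) (w s ω)⟫ ∂μ)
              + ∑ j ∈ Finset.Icc (s + 1) t, ∫ ω, ⟪w s ω, (A ^ (t - j)) (ε j ω)⟫ ∂μ := by
            rw [integral_add hint0 (integrable_finset_sum _ hints), integral_finset_sum _ hints]
        _ = ∫ ω, ⟪w s ω, (A ^ (t - s)) (w s ω)⟫ ∂μ := by
            rw [Finset.sum_congr rfl (fun j hj => hcross s j
              (by rw [Finset.mem_Icc] at hj; omega) (A ^ (t - j)))]
            simp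
    rw [heq]
    calc |∫ ω, ⟪w s ω, (A ^ (t - s)) (w s ω)⟫ ∂μ|
        ≤ ∫ ω, |⟪w s ω, (A ^ (t - s)) (w s ω)⟫| ∂μ := by
          simpa [Real.norm_eq_abs] using norm_integral_le_integral_norm (μ := μ)
            (fun ω => ⟪w s ω, (A ^ (t - s)) (w s ω)⟫)
      _ ≤ ∫ _, 4 * M ^ 2 * ‖A ^ (t - s)‖ ∂μ := by
          refine integral_mono_ae hint0.abs (integrable_const _) ?_
          filter_upwards [hw_bdd s] with ω hω
          calc |⟪w s ω, (A ^ (t - s)) (w s ω)⟫| ≤ ‖w s ω‖ * ‖(A ^ (t - s)) (w s ω)‖ :=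
                abs_real_inner_le_norm _ _
            _ ≤ (2 * M) * (‖A ^ (t - s)‖ * (2 * M)) := by
                refine mul_le_mul hω (le_trans ((A ^ _).le_opNorm _)
                  (mul_le_mul_of_nonneg_left hω (norm_nonneg _))) (norm_nonneg _) (by positivity)
            _ = 4 * M ^ 2 * ‖A ^ (t - s)‖ := by ring
      _ = 4 * M ^ 2 * ‖A ^ (t - s)‖ := by simp
  -- second moment of the partial sums of w
  have hsum_w : ∀ T : ℕ, 1 ≤ T →
      ∫ ω, ‖∑ t ∈ Finset.Icc 1 T, w t ω‖ ^ 2 ∂μ ≤ 8 * M ^ 2 * B * T := by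
    intro T hT
    have hints : ∀ s ∈ Finset.Icc 1 T, ∀ t ∈ Finset.Icc 1 T,
        Integrable (fun ω => ⟪w s ω, w t ω⟫) μ := fun s _ t _ =>
      hinner_int _ _ (2 * M) (2 * M) (by positivity) (hw_meas s) (hw_meas t)
        (hw_bdd s) (hw_bdd t)
    have hcov' : ∀ s ∈ Finset.Icc 1 T, ∀ t ∈ Finset.Icc 1 T,
        |∫ ω, ⟪w s ω, w t ω⟫ ∂μ| ≤ 4 * M ^ 2 * ‖A ^ (t - s + (s - t))‖ := by
      intro s hs t ht
      rw [Finset.mem_Icc] at hs ht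
      rcases le_total s t with h | h
      · rw [show t - s + (s - t) = t - s from by omega]
        exact hcov s t hs.1 h
      · rw [show t - s + (s - t) = s - t from by omega]
        rw [show (∫ ω, ⟪w s ω, w t ω⟫ ∂μ) = ∫ ω, ⟪w t ω, w s ω⟫ ∂μ from
          integral_congr_ae (Filter.Eventually.of_forall fun ω => real_inner_comm _ _)]
        exact hcov t s ht.1 h
    have hrow : ∀ s ∈ Finset.Icc 1 T,
        ∑ t ∈ Finset.Icc 1 T, ‖A ^ (t - s + (s - t))‖ ≤ 2 * B := by
      intro s hs
      rw [Finset.mem_Icc] at hs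
      have hIcc : Finset.Icc 1 T = Finset.Ioc 0 T := rfl
      rw [hIcc, ← Finset.sum_Ioc_consecutive (fun t => ‖A ^ (t - s + (s - t))‖)
        (Nat.zero_le s) hs.2]
      have h1 : ∑ t ∈ Finset.Ioc 0 s, ‖A ^ (t - s + (s - t))‖ ≤ B := by
        have e1 : ∑ t ∈ Finset.Ioc 0 s, ‖A ^ (t - s + (s - t))‖
            = ∑ t ∈ Finset.Ioc 0 s, ‖A ^ (s - t)‖ := by
          refine Finset.sum_congr rfl fun t ht => ?_
          rw [Finset.mem_Ioc] at ht
          congr 2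
          omega
        have e2 : ∑ h ∈ (Finset.Ioc 0 s).image (fun t => s - t), ‖A ^ h‖
            = ∑ t ∈ Finset.Ioc 0 s, ‖A ^ (s - t)‖ :=
          Finset.sum_image (f := fun h => ‖A ^ h‖) (g := fun t => s - t)
            (fun x hx y hy hxy => by
              rw [Finset.mem_coe, Finset.mem_Ioc] at hx hy; simp only at hxy; omega)
        rw [e1, ← e2]
        refine le_trans (Finset.sum_le_sum_of_subset_of_nonneg ?_
          (fun _ _ _ => norm_nonneg _)) (hB (T + 1))
        intro h hh
        rw [Finset.mem_image] at hh
        obtain ⟨t, ht, rfl⟩ := hh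
        rw [Finset.mem_Ioc] at ht
        rw [Finset.mem_range]
        omega
      have h2 : ∑ t ∈ Finset.Ioc s T, ‖A ^ (t - s + (s - t))‖ ≤ B := by
        have e1 : ∑ t ∈ Finset.Ioc s T, ‖A ^ (t - s + (s - t))‖
            = ∑ t ∈ Finset.Ioc s T, ‖A ^ (t - s)‖ := by
          refine Finset.sum_congr rfl fun t ht => ?_
          rw [Finset.mem_Ioc] at ht
          congr 2
          omega
        have e2 : ∑ h ∈ (Finset.Ioc s T).image (fun t => t - s), ‖A ^ h‖
            = ∑ t ∈ Finset.Ioc s T, ‖A ^ (t - s)‖ :=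
          Finset.sum_image (f := fun h => ‖A ^ h‖) (g := fun t => t - s)
            (fun x hx y hy hxy => by
              rw [Finset.mem_coe, Finset.mem_Ioc] at hx hy; simp only at hxy; omega)
        rw [e1, ← e2]
        refine le_trans (Finset.sum_le_sum_of_subset_of_nonneg ?_
          (fun _ _ _ => norm_nonneg _)) (hB (T + 1))
        intro h hh
        rw [Finset.mem_image] at hh
        obtain ⟨t, ht, rfl⟩ := hh
        rw [Finset.mem_Ioc] at ht
        rw [Finset.mem_range]
        omega
      linarith
    calc ∫ ω, ‖∑ t ∈ Finset.Icc 1 T, w t ω‖ ^ 2 ∂μ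
        = ∫ ω, ∑ s ∈ Finset.Icc 1 T, ∑ t ∈ Finset.Icc 1 T, ⟪w s ω, w t ω⟫ ∂μ := by
          refine integral_congr_ae (Filter.Eventually.of_forall fun ω => ?_)
          show ‖∑ t ∈ Finset.Icc 1 T, w t ω‖ ^ 2 = _
          rw [← real_inner_self_eq_norm_sq, sum_inner]
          exact Finset.sum_congr rfl fun s _ => inner_sum _ _ _
      _ = ∑ s ∈ Finset.Icc 1 T, ∫ ω, ∑ t ∈ Finset.Icc 1 T, ⟪w s ω, w t ω⟫ ∂μ :=
          integral_finset_sum _ (fun s hs => integrable_finset_sum _ (hints s hs))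
      _ = ∑ s ∈ Finset.Icc 1 T, ∑ t ∈ Finset.Icc 1 T, ∫ ω, ⟪w s ω, w t ω⟫ ∂μ :=
          Finset.sum_congr rfl fun s hs => integral_finset_sum _ (hints s hs)
      _ ≤ ∑ s ∈ Finset.Icc 1 T, ∑ t ∈ Finset.Icc 1 T, |∫ ω, ⟪w s ω, w t ω⟫ ∂μ| :=
          Finset.sum_le_sum fun s _ => Finset.sum_le_sum fun t _ => le_abs_self _
      _ ≤ ∑ s ∈ Finset.Icc 1 T, ∑ t ∈ Finset.Icc 1 T, 4 * M ^ 2 * ‖A ^ (t - s + (s - t))‖ :=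
          Finset.sum_le_sum fun s hs => Finset.sum_le_sum fun t ht => hcov' s hs t ht
      _ ≤ ∑ s ∈ Finset.Icc 1 T, 4 * M ^ 2 * (2 * B) := by
          refine Finset.sum_le_sum fun s hs => ?_
          rw [← Finset.mul_sum]
          exact mul_le_mul_of_nonneg_left (hrow s hs) (by positivity)
      _ = 8 * M ^ 2 * B * T := by
          rw [Finset.sum_const, Nat.card_Icc]
          simp only [nsmul_eq_mul]
          push_cast
          ring
  -- the noise part
  have hNT : ∀ T : ℕ, 1 ≤ T → 1 ≤ N T := by
    intro T hT
    by_contra h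
    have : N T = 0 := by omega
    have h2 := hN T hT
    rw [this] at h2
    simp only [Nat.cast_zero] at h2
    have : (0:ℝ) < c * (T : ℝ) ^ (1 / r) := by
      have : (0:ℝ) < (T:ℝ) := by exact_mod_cast hT
      positivity
    linarith
  have hNpow : ∀ T : ℕ, 1 ≤ T → ((N T : ℝ)) ^ (-r) ≤ c ^ (-r) * (T:ℝ)⁻¹ := by
    intro T hT
    have hT0 : (0:ℝ) < (T:ℝ) := by exact_mod_cast hT
    have h1 : (0:ℝ) < c * (T : ℝ) ^ (1 / r) := by positivity
    have h2 : ((N T : ℝ)) ^ (-r) ≤ (c * (T : ℝ) ^ (1 / r)) ^ (-r) :=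
      Real.rpow_le_rpow_of_nonpos h1 (hN T hT) (by linarith)
    refine h2.trans_eq ?_
    rw [Real.mul_rpow hc.le (Real.rpow_nonneg hT0.le _), ← Real.rpow_mul hT0.le,
      show (1 / r) * (-r) = -1 by field_simp, Real.rpow_neg_one]
  have hsum_Δ : ∀ T : ℕ, 1 ≤ T →
      ∫ ω, ‖∑ t ∈ Finset.Icc 1 T, (fhat (N T) t ω - f t ω)‖ ^ 2 ∂μ
        ≤ (T:ℝ) * ((T:ℝ) * (CΔ * ((N T : ℝ)) ^ (-r))) := by
    intro T hT
    have hn1 : 1 ≤ N T := hNT T hT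
    set n := N T with hn_def
    have hΔmeas : ∀ t, Measurable (fun ω => fhat n t ω - f t ω) :=
      fun t => (hfhat_meas n t).sub (hf_meas t)
    have hae : ∀ᵐ ω ∂μ, ∀ t ∈ Finset.Icc 1 T, ‖fhat n t ω - f t ω‖ ≤ M :=
      (Filter.eventually_all_finset _).mpr fun t _ => hΔ_bdd n t
    have hint_lhs : Integrable (fun ω => ‖∑ t ∈ Finset.Icc 1 T, (fhat n t ω - f t ω)‖ ^ 2) μ := by
      refine hintR _ (((Finset.measurable_sum _ fun t _ => hΔmeas t).norm).pow_const 2)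
        ((M * T) ^ 2) ?_
      filter_upwards [hae] with ω hω
      rw [abs_of_nonneg (by positivity)]
      refine pow_le_pow_left₀ (norm_nonneg _) ?_ 2
      calc ‖∑ t ∈ Finset.Icc 1 T, (fhat n t ω - f t ω)‖
          ≤ ∑ t ∈ Finset.Icc 1 T, ‖fhat n t ω - f t ω‖ := norm_sum_le _ _
        _ ≤ ∑ _t ∈ Finset.Icc 1 T, M := Finset.sum_le_sum hω
        _ = M * T := by rw [Finset.sum_const, Nat.card_Icc]; simp [nsmul_eq_mul]; ring
    have hint_rhs : ∀ t, Integrable (fun ω => ‖fhat n t ω - f t ω‖ ^ 2) μ := by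
      intro t
      refine hintR _ ((hΔmeas t).norm.pow_const 2) (M ^ 2) ?_
      filter_upwards [hΔ_bdd n t] with ω hω
      rw [abs_of_nonneg (by positivity)]
      exact pow_le_pow_left₀ (norm_nonneg _) hω 2
    calc ∫ ω, ‖∑ t ∈ Finset.Icc 1 T, (fhat n t ω - f t ω)‖ ^ 2 ∂μ
        ≤ ∫ ω, (T:ℝ) * ∑ t ∈ Finset.Icc 1 T, ‖fhat n t ω - f t ω‖ ^ 2 ∂μ := by
          refine integral_mono_ae hint_lhs
            ((integrable_finset_sum _ fun t _ => hint_rhs t).const_mul _) ?_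
          filter_upwards with ω
          calc ‖∑ t ∈ Finset.Icc 1 T, (fhat n t ω - f t ω)‖ ^ 2
              ≤ (∑ t ∈ Finset.Icc 1 T, ‖fhat n t ω - f t ω‖) ^ 2 :=
                pow_le_pow_left₀ (norm_nonneg _) (norm_sum_le _ _) 2
            _ ≤ (Finset.Icc 1 T).card * ∑ t ∈ Finset.Icc 1 T, ‖fhat n t ω - f t ω‖ ^ 2 :=
                sq_sum_le_card_mul_sum_sq
            _ = (T:ℝ) * ∑ t ∈ Finset.Icc 1 T, ‖fhat n t ω - f t ω‖ ^ 2 := by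
                rw [Nat.card_Icc]
                norm_num
      _ = (T:ℝ) * ∑ t ∈ Finset.Icc 1 T, ∫ ω, ‖fhat n t ω - f t ω‖ ^ 2 ∂μ := by
          rw [MeasureTheory.integral_const_mul, integral_finset_sum _ fun t _ => hint_rhs t]
      _ ≤ (T:ℝ) * ∑ _t ∈ Finset.Icc 1 T, CΔ * ((n : ℝ)) ^ (-r) := by
          refine mul_le_mul_of_nonneg_left (Finset.sum_le_sum fun t _ => hΔ_mse n hn1 t)
            (Nat.cast_nonneg T)
      _ = (T:ℝ) * ((T:ℝ) * (CΔ * ((n : ℝ)) ^ (-r))) := by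
          rw [Finset.sum_const, Nat.card_Icc]
          simp [nsmul_eq_mul]
  -- final assembly
  rw [isBigO_iff]
  refine ⟨16 * M ^ 2 * B + 2 * (CΔ * c ^ (-r)), ?_⟩
  filter_upwards [eventually_ge_atTop 1] with T hT
  have hT0 : (0:ℝ) < (T:ℝ) := by exact_mod_cast hT
  set n := N T with hn_def
  set SW : Ω → H := fun ω => ∑ t ∈ Finset.Icc 1 T, w t ω with hSW
  set SD : Ω → H := fun ω => ∑ t ∈ Finset.Icc 1 T, (fhat n t ω - f t ω) with hSD
  have hpt : ∀ ω, ((T:ℝ)⁻¹ • ∑ t ∈ Finset.Icc 1 T, fhat n t ω) - Ef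
      = (T:ℝ)⁻¹ • (SW ω + SD ω) := by
    intro ω
    have h1 : ∑ t ∈ Finset.Icc 1 T, fhat n t ω = (T:ℝ) • Ef + (SW ω + SD ω) := by
      have h2 : ∀ t ∈ Finset.Icc 1 T, fhat n t ω
          = Ef + (w t ω + (fhat n t ω - f t ω)) := by
        intro t _
        rw [hfw t ω]
        abel
      rw [Finset.sum_congr rfl h2, Finset.sum_add_distrib, Finset.sum_const, Nat.card_Icc,
        Finset.sum_add_distrib]
      congr 1
      rw [Nat.add_sub_cancel, ← Nat.cast_smul_eq_nsmul ℝ]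
    rw [h1, smul_add, inv_smul_smul₀ (ne_of_gt hT0), add_sub_cancel_left]
  -- integrability
  have hSW_meas : Measurable SW := Finset.measurable_sum _ fun t _ => hw_meas t
  have hSD_meas : Measurable SD := Finset.measurable_sum _ fun t _ =>
    (hfhat_meas n t).sub (hf_meas t)
  have hSW_bdd : ∀ᵐ ω ∂μ, ‖SW ω‖ ≤ 2 * M * T := by
    filter_upwards [(Filter.eventually_all_finset (Finset.Icc 1 T)).mpr
      (fun t _ => hw_bdd t)] with ω hω
    calc ‖SW ω‖ ≤ ∑ t ∈ Finset.Icc 1 T, ‖w t ω‖ := norm_sum_le _ _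
      _ ≤ ∑ _t ∈ Finset.Icc 1 T, (2 * M) := Finset.sum_le_sum hω
      _ = 2 * M * T := by rw [Finset.sum_const, Nat.card_Icc]; simp [nsmul_eq_mul]; ring
  have hSD_bdd : ∀ᵐ ω ∂μ, ‖SD ω‖ ≤ M * T := by
    filter_upwards [(Filter.eventually_all_finset (Finset.Icc 1 T)).mpr
      (fun t _ => hΔ_bdd n t)] with ω hω
    calc ‖SD ω‖ ≤ ∑ t ∈ Finset.Icc 1 T, ‖fhat n t ω - f t ω‖ := norm_sum_le _ _
      _ ≤ ∑ _t ∈ Finset.Icc 1 T, M := Finset.sum_le_sum hω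
      _ = M * T := by rw [Finset.sum_const, Nat.card_Icc]; simp [nsmul_eq_mul]; ring
  have hSW_int : Integrable (fun ω => ‖SW ω‖ ^ 2) μ := by
    refine hintR _ (hSW_meas.norm.pow_const 2) ((2 * M * T) ^ 2) ?_
    filter_upwards [hSW_bdd] with ω hω
    rw [abs_of_nonneg (by positivity)]
    exact pow_le_pow_left₀ (norm_nonneg _) hω 2
  have hSD_int : Integrable (fun ω => ‖SD ω‖ ^ 2) μ := by
    refine hintR _ (hSD_meas.norm.pow_const 2) ((M * T) ^ 2) ?_
    filter_upwards [hSD_bdd] with ω hω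
    rw [abs_of_nonneg (by positivity)]
    exact pow_le_pow_left₀ (norm_nonneg _) hω 2
  have hlhs_int : Integrable
      (fun ω => ‖((T:ℝ)⁻¹ • ∑ t ∈ Finset.Icc 1 T, fhat n t ω) - Ef‖ ^ 2) μ := by
    refine hintR _ ((((Finset.measurable_sum _ fun t _ =>
      hfhat_meas n t).const_smul ((T:ℝ)⁻¹)).sub measurable_const).norm.pow_const 2)
      (((T:ℝ)⁻¹ * (2 * M * T + M * T)) ^ 2) ?_
    filter_upwards [hSW_bdd, hSD_bdd] with ω h1 h2
    rw [abs_of_nonneg (by positivity)]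
    refine pow_le_pow_left₀ (norm_nonneg _) ?_ 2
    rw [hpt ω, norm_smul, Real.norm_eq_abs, abs_of_nonneg (by positivity)]
    refine mul_le_mul_of_nonneg_left ?_ (by positivity)
    exact le_trans (norm_add_le _ _) (add_le_add h1 h2)
  have hrhs_int : Integrable
      (fun ω => ((T:ℝ)⁻¹) ^ 2 * (2 * ‖SW ω‖ ^ 2 + 2 * ‖SD ω‖ ^ 2)) μ :=
    (((hSW_int.const_mul 2).add (hSD_int.const_mul 2)).const_mul _)
  have hchain : ∫ ω, ‖((T:ℝ)⁻¹ • ∑ t ∈ Finset.Icc 1 T, fhat n t ω) - Ef‖ ^ 2 ∂μ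
      ≤ (16 * M ^ 2 * B + 2 * (CΔ * c ^ (-r))) * (T:ℝ)⁻¹ := by
    calc ∫ ω, ‖((T:ℝ)⁻¹ • ∑ t ∈ Finset.Icc 1 T, fhat n t ω) - Ef‖ ^ 2 ∂μ
        ≤ ∫ ω, ((T:ℝ)⁻¹) ^ 2 * (2 * ‖SW ω‖ ^ 2 + 2 * ‖SD ω‖ ^ 2) ∂μ := by
          refine integral_mono_ae hlhs_int hrhs_int ?_
          filter_upwards with ω
          rw [hpt ω, norm_smul, Real.norm_eq_abs, abs_of_nonneg (by positivity), mul_pow]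
          refine mul_le_mul_of_nonneg_left ?_ (by positivity)
          refine le_trans (pow_le_pow_left₀ (norm_nonneg _) (norm_add_le _ _) 2) ?_
          nlinarith [sq_nonneg (‖SW ω‖ - ‖SD ω‖)]
      _ = ((T:ℝ)⁻¹) ^ 2 * (2 * ∫ ω, ‖SW ω‖ ^ 2 ∂μ + 2 * ∫ ω, ‖SD ω‖ ^ 2 ∂μ) := by
          rw [MeasureTheory.integral_const_mul,
            integral_add (hSW_int.const_mul 2) (hSD_int.const_mul 2),
            MeasureTheory.integral_const_mul, MeasureTheory.integral_const_mul]
      _ ≤ ((T:ℝ)⁻¹) ^ 2 * (2 * (8 * M ^ 2 * B * T)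
            + 2 * ((T:ℝ) * ((T:ℝ) * (CΔ * (c ^ (-r) * (T:ℝ)⁻¹))))) := by
          refine mul_le_mul_of_nonneg_left (add_le_add ?_ ?_) (by positivity)
          · exact mul_le_mul_of_nonneg_left (hsum_w T hT) (by norm_num)
          · refine mul_le_mul_of_nonneg_left (le_trans (hsum_Δ T hT) ?_) (by norm_num)
            refine mul_le_mul_of_nonneg_left (mul_le_mul_of_nonneg_left ?_ hT0.le) hT0.le
            exact mul_le_mul_of_nonneg_left (hNpow T hT) hCΔ.le
      _ = (16 * M ^ 2 * B + 2 * (CΔ * c ^ (-r))) * (T:ℝ)⁻¹ := by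
          rw [show CΔ * (c ^ (-r) * (T:ℝ)⁻¹) = (CΔ * c ^ (-r)) * (T:ℝ)⁻¹ from
            (mul_assoc _ _ _).symm,
            aux_alg (T:ℝ) (8 * M ^ 2 * B) (CΔ * c ^ (-r)) (ne_of_gt hT0)]
          ring
  rw [Real.norm_eq_abs, Real.norm_eq_abs,
    abs_of_nonneg (integral_nonneg fun ω => by positivity),
    abs_of_nonneg (inv_nonneg.mpr hT0.le)]
  exact hchain
end

section
/- Let Q and Q̂ be self-adjoint nonnegative compact operators on a separable Hilbert space H. Suppose the eigenvalues of Q satisfy λ₁ > λ₂ > ⋯ > 0 with associated unit eigenvectors (v_k), and let (λ̂_k, v̂_k) be eigenpairs of Q̂ with unit eigenvectors and λ̂₁ ≥ λ̂₂ ≥ ⋯. Define v_k' = sgn(⟨v̂_k, v_k⟩)·v_k. Then for every k, ‖v̂_k − v_k'‖ ≤ τ_k·‖Q̂ − Q‖, where τ₁ = 2√2·(λ₁ − λ₂)^{-1} and τ_k = 2√2·max{(λ_{k−1} − λ_k)^{-1}, (λ_k − λ_{k+1})^{-1}} for k ≥ 2. -/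
open scoped RealInnerProductSpace

/-- the spectral-gap constants `τ₁ = 2√2 (λ₁−λ₂)⁻¹`,
`τ_k = 2√2 max{(λ_{k−1}−λ_k)⁻¹, (λ_k−λ_{k+1})⁻¹}` for `k ≥ 2` (here 0-indexed). -/
noncomputable def tauGap (lam : ℕ → ℝ) : ℕ → ℝ
  | 0 => 2 * Real.sqrt 2 * (lam 0 - lam 1)⁻¹
  | k + 1 => 2 * Real.sqrt 2 * max ((lam k - lam (k + 1))⁻¹) ((lam (k + 1) - lam (k + 2))⁻¹)

section AuxLemmas



variable {H : Type*} [NormedAddCommGroup H] [InnerProductSpace ℝ H] [CompleteSpace H]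

lemma sum_c_sq {u : ℕ → H} (hu : Orthonormal ℝ u) (x : H) :
    Summable fun j => ⟪u j, x⟫ ^ 2 := by
  simpa [Real.norm_eq_abs, sq_abs] using Orthonormal.inner_products_summable x hu

lemma bessel {u : ℕ → H} (hu : Orthonormal ℝ u) (x : H) :
    ∑' j, ⟪u j, x⟫ ^ 2 ≤ ‖x‖ ^ 2 := by
  simpa [Real.norm_eq_abs, sq_abs] using Orthonormal.tsum_inner_products_le x hu

lemma sum_vec {u : ℕ → H} (hu : Orthonormal ℝ u) {a : ℕ → ℝ}
    (ha : Summable fun j => a j ^ 2) : Summable fun j => a j • u j := by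
  have h := (hu.orthogonalFamily.summable_iff_norm_sq_summable a).mpr
    (by simpa [Real.norm_eq_abs, sq_abs] using ha)
  simpa [LinearIsometry.toSpanSingleton_apply] using h

variable {A : H →L[ℝ] H} {mu : ℕ → ℝ} {u : ℕ → H} {C : ℝ} {x : H}

lemma mu_c_sq_summable (hu : Orthonormal ℝ u) (hC : ∀ j, |mu j| ≤ C) (x : H) :
    Summable fun j => (mu j * ⟪u j, x⟫) ^ 2 := by
  refine Summable.of_nonneg_of_le (fun j => sq_nonneg _) (fun j => ?_)
    ((sum_c_sq hu x).mul_left (C ^ 2))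
  rw [mul_pow]
  have h1 : mu j ^ 2 ≤ C ^ 2 := by
    calc mu j ^ 2 = |mu j| ^ 2 := (sq_abs _).symm
    _ ≤ C ^ 2 := pow_le_pow_left₀ (abs_nonneg _) (hC j) 2
  exact mul_le_mul_of_nonneg_right h1 (sq_nonneg _)

lemma rep_summable (hu : Orthonormal ℝ u) (hC : ∀ j, |mu j| ≤ C) (x : H) :
    Summable fun j => (mu j * ⟪u j, x⟫) • u j :=
  sum_vec hu (mu_c_sq_summable hu hC x)

lemma rep_eq (hu : Orthonormal ℝ u) (hC : ∀ j, |mu j| ≤ C)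
    (hx : A x = ∑' j, mu j • (⟪u j, x⟫ • u j)) :
    A x = ∑' j, (mu j * ⟪u j, x⟫) • u j := by
  rw [hx]; congr 1; funext j; rw [smul_smul]

lemma rep_inner (hu : Orthonormal ℝ u) (hC : ∀ j, |mu j| ≤ C)
    (hx : A x = ∑' j, mu j • (⟪u j, x⟫ • u j)) (y : H) :
    ⟪y, A x⟫ = ∑' j, (mu j * ⟪u j, x⟫) * ⟪y, u j⟫ := by
  rw [rep_eq hu hC hx]
  have h := (innerSL ℝ y).map_tsum (rep_summable hu hC x)
  simpa [innerSL_apply_apply, real_inner_smul_right] using h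

lemma rep_coeff (hu : Orthonormal ℝ u) (hC : ∀ j, |mu j| ≤ C)
    (hx : A x = ∑' j, mu j • (⟪u j, x⟫ • u j)) (i : ℕ) :
    ⟪u i, A x⟫ = mu i * ⟪u i, x⟫ := by
  rw [rep_inner hu hC hx (u i), tsum_eq_single i (fun j hj => by
    rw [hu.2 (Ne.symm hj)]; ring)]
  · have : ⟪u i, u i⟫ = (1 : ℝ) := by
      have := hu.1 i
      rw [real_inner_self_eq_norm_sq, this]; norm_num
    rw [this, mul_one]

lemma rep_quad (hu : Orthonormal ℝ u) (hC : ∀ j, |mu j| ≤ C)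
    (hx : A x = ∑' j, mu j • (⟪u j, x⟫ • u j)) :
    ⟪x, A x⟫ = ∑' j, mu j * ⟪u j, x⟫ ^ 2 := by
  rw [rep_inner hu hC hx x]
  congr 1; funext j
  rw [real_inner_comm x (u j)]; ring



lemma norm_sub_sign_sq_le {H : Type*} [NormedAddCommGroup H] [InnerProductSpace ℝ H]
    {a b : H} (ha : ‖a‖ = 1) (hb : ‖b‖ = 1) :
    ‖a - Real.sign ⟪a, b⟫ • b‖ ^ 2 ≤ 2 * (1 - ⟪a, b⟫ ^ 2) := by
  set t : ℝ := ⟪a, b⟫ with ht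
  set s : ℝ := Real.sign t with hs
  have habs : |t| ≤ 1 := by
    have h := abs_real_inner_le_norm a b
    rwa [ha, hb, mul_one] at h
  have hst : s * t = |t| := by
    rcases lt_trichotomy t 0 with h | h | h
    · rw [hs, Real.sign_of_neg h, abs_of_neg h]; ring
    · rw [h, mul_zero, abs_zero]
    · rw [hs, Real.sign_of_pos h, abs_of_pos h]; ring
  have hs2 : s ^ 2 ≤ 1 := by
    rcases Real.sign_apply_eq t with h | h | h <;> rw [hs, h] <;> norm_num
  have hexp : ‖a - s • b‖ ^ 2 = 1 - 2 * (s * t) + s ^ 2 := by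
    rw [norm_sub_sq_real, real_inner_smul_right, norm_smul, ha, hb]
    simp only [mul_pow, sq_abs, Real.norm_eq_abs]
    ring
  rw [hexp, hst]
  have ht2 : t ^ 2 ≤ |t| := by
    calc t ^ 2 = |t| * |t| := by rw [← sq_abs]; ring
    _ ≤ 1 * |t| := mul_le_mul_of_nonneg_right habs (abs_nonneg t)
    _ = |t| := one_mul _
  nlinarith

end AuxLemmas

section WeylSection
variable {H : Type*} [NormedAddCommGroup H] [InnerProductSpace ℝ H] [CompleteSpace H]

lemma weyl {A B : H →L[ℝ] H} {mu nu : ℕ → ℝ} {u w : ℕ → H}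
    (hu : Orthonormal ℝ u) (hw : Orthonormal ℝ w)
    (hmu_anti : Antitone mu) (hmu0 : ∀ j, 0 ≤ mu j)
    (hnu_anti : Antitone nu) (hnu0 : ∀ j, 0 ≤ nu j)
    (hA : ∀ x, A x = ∑' j, mu j • (⟪u j, x⟫ • u j))
    (hB : ∀ x, B x = ∑' j, nu j • (⟪w j, x⟫ • w j)) (k : ℕ) :
    nu k ≤ mu k + ‖B - A‖ := by
  have hmuC : ∀ j, |mu j| ≤ mu 0 := fun j => by
    rw [abs_of_nonneg (hmu0 j)]; exact hmu_anti (Nat.zero_le j)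
  have hnuC : ∀ j, |nu j| ≤ nu 0 := fun j => by
    rw [abs_of_nonneg (hnu0 j)]; exact hnu_anti (Nat.zero_le j)
  -- the subspace W spanned by w 0, ..., w k
  set W : Submodule ℝ H := Submodule.span ℝ (Set.range fun i : Fin (k+1) => w i) with hW
  haveI : FiniteDimensional ℝ W := FiniteDimensional.span_of_finite ℝ (Set.finite_range _)
  have hdim : Module.finrank ℝ W = k + 1 := by
    have hli : LinearIndependent ℝ (fun i : Fin (k+1) => w (i : ℕ)) :=
      hw.linearIndependent.comp _ Fin.val_injective
    rw [hW]
    rw [finrank_span_eq_card hli, Fintype.card_fin]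
  -- the linear map collecting inner products with u 0, ..., u (k-1)
  set φ : H →ₗ[ℝ] (Fin k → ℝ) :=
    LinearMap.pi (fun i : Fin k => (innerSL ℝ (u (i : ℕ)) : H →ₗ[ℝ] ℝ)) with hφ
  set ψ := φ.domRestrict W with hψ
  have hker : LinearMap.ker ψ ≠ ⊥ := by
    intro hbot
    have h1 := LinearMap.finrank_range_add_finrank_ker ψ
    rw [hbot, finrank_bot, hdim] at h1
    have h2 : Module.finrank ℝ (LinearMap.range ψ) ≤ k := by
      simpa using Submodule.finrank_le (LinearMap.range ψ)
    omega
  obtain ⟨x0, hx0ker, hx0ne⟩ := (Submodule.ne_bot_iff _).mp hker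
  set x : H := (x0 : H) with hxd
  have hxne : x ≠ 0 := by simpa [hxd, Submodule.coe_eq_zero] using hx0ne
  have hxW : x ∈ W := x0.2
  -- inner products with u j vanish for j < k
  have hoU : ∀ j, j < k → ⟪u j, x⟫ = 0 := by
    intro j hj
    have h0 : ψ x0 = 0 := LinearMap.mem_ker.mp hx0ker
    have := congrFun h0 ⟨j, hj⟩
    simpa [hψ, hφ] using this
  -- inner products with w j vanish for j > k
  have hoW : ∀ j, k < j → ⟪w j, x⟫ = 0 := by
    intro j hj
    have hWle : W ≤ LinearMap.ker (innerSL ℝ (w j) : H →ₗ[ℝ] ℝ) := by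
      rw [hW, Submodule.span_le]
      rintro _ ⟨i, rfl⟩
      have : ⟪w j, w (i : ℕ)⟫ = 0 := hw.2 (by omega : j ≠ (i : ℕ))
      simpa [LinearMap.mem_ker] using this
    simpa [LinearMap.mem_ker] using hWle hxW
  -- x is the sum of its w-coefficients
  have hxsum : x = ∑ i : Fin (k+1), ⟪w (i : ℕ), x⟫ • w (i : ℕ) := by
    set y := x - ∑ i : Fin (k+1), ⟪w (i : ℕ), x⟫ • w (i : ℕ) with hy
    have hyW : y ∈ W := by
      refine Submodule.sub_mem _ hxW (Submodule.sum_mem _ fun i _ => Submodule.smul_mem _ _ ?_)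
      exact Submodule.subset_span ⟨i, rfl⟩
    have hyorth : ∀ i : Fin (k+1), ⟪y, w (i : ℕ)⟫ = 0 := by
      intro i
      rw [hy, inner_sub_left, sum_inner]
      have hsum : ∑ i' : Fin (k+1), ⟪⟪w (i' : ℕ), x⟫ • w (i' : ℕ), w (i : ℕ)⟫
          = ⟪w (i : ℕ), x⟫ := by
        rw [Finset.sum_eq_single i]
        · rw [real_inner_smul_left]
          have h1 : ⟪w (i : ℕ), w (i : ℕ)⟫ = (1 : ℝ) := by
            rw [real_inner_self_eq_norm_sq, hw.1 (i : ℕ)]; norm_num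
          rw [h1, mul_one]
        · intro i' _ hne
          rw [real_inner_smul_left, hw.2 (fun h => hne (Fin.val_injective h)), mul_zero]
        · intro h; exact absurd (Finset.mem_univ i) h
      rw [hsum, real_inner_comm, sub_self]
    have hyy : ⟪y, y⟫ = (0 : ℝ) := by
      have hWle : W ≤ LinearMap.ker (innerSL ℝ y : H →ₗ[ℝ] ℝ) := by
        rw [hW, Submodule.span_le]
        rintro _ ⟨i, rfl⟩
        simpa [LinearMap.mem_ker] using hyorth i
      simpa [LinearMap.mem_ker] using hWle hyW
    have : y = 0 := by rwa [inner_self_eq_zero] at hyy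
    rw [hy, sub_eq_zero] at this
    exact this
  -- Parseval on W
  have hnorm : ∑ j ∈ Finset.range (k+1), ⟪w j, x⟫ ^ 2 = ‖x‖ ^ 2 := by
    rw [← Fin.sum_univ_eq_sum_range (fun j => ⟪w j, x⟫ ^ 2) (k+1)]
    rw [← real_inner_self_eq_norm_sq x]
    conv_rhs => rw [hxsum]
    rw [real_inner_comm, sum_inner]
    refine Finset.sum_congr rfl fun i _ => ?_
    rw [real_inner_smul_left, ← hxsum]; ring
  -- quadratic form bounds
  have hq1 : nu k * ‖x‖ ^ 2 ≤ ⟪x, B x⟫ := by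
    rw [rep_quad hw hnuC (hB x)]
    have he : ∑' j, nu j * ⟪w j, x⟫ ^ 2 = ∑ j ∈ Finset.range (k+1), nu j * ⟪w j, x⟫ ^ 2 := by
      refine tsum_eq_sum fun j hj => ?_
      rw [hoW j (by simpa using hj)]; ring
    rw [he, ← hnorm, Finset.mul_sum]
    refine Finset.sum_le_sum fun j hj => ?_
    exact mul_le_mul_of_nonneg_right
      (hnu_anti (Nat.lt_succ_iff.mp (Finset.mem_range.mp hj))) (sq_nonneg _)
    
  have hq2 : ⟪x, A x⟫ ≤ mu k * ‖x‖ ^ 2 := by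
    rw [rep_quad hu hmuC (hA x)]
    have hsum1 : Summable fun j => mu j * ⟪u j, x⟫ ^ 2 :=
      Summable.of_nonneg_of_le (fun j => mul_nonneg (hmu0 j) (sq_nonneg _))
        (fun j => mul_le_mul_of_nonneg_right (hmu_anti (Nat.zero_le j)) (sq_nonneg _))
        ((sum_c_sq hu x).mul_left (mu 0))
    calc ∑' j, mu j * ⟪u j, x⟫ ^ 2 ≤ ∑' j, mu k * ⟪u j, x⟫ ^ 2 := by
          refine Summable.tsum_le_tsum (fun j => ?_) hsum1 ((sum_c_sq hu x).mul_left (mu k))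
          rcases lt_or_ge j k with hj | hj
          · rw [hoU j hj]; ring_nf; exact le_refl _
          · exact mul_le_mul_of_nonneg_right (hmu_anti hj) (sq_nonneg _)
      _ = mu k * ∑' j, ⟪u j, x⟫ ^ 2 := tsum_mul_left
      _ ≤ mu k * ‖x‖ ^ 2 := mul_le_mul_of_nonneg_left (bessel hu x) (hmu0 k)
  have hcross : ⟪x, B x⟫ - ⟪x, A x⟫ ≤ ‖B - A‖ * ‖x‖ ^ 2 := by
    have h1 : ⟪x, B x⟫ - ⟪x, A x⟫ = ⟪x, (B - A) x⟫ := by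
      rw [ContinuousLinearMap.sub_apply, inner_sub_right]
    rw [h1]
    calc ⟪x, (B - A) x⟫ ≤ ‖x‖ * ‖(B - A) x‖ := real_inner_le_norm _ _
      _ ≤ ‖x‖ * (‖B - A‖ * ‖x‖) :=
          mul_le_mul_of_nonneg_left ((B - A).le_opNorm x) (norm_nonneg x)
      _ = ‖B - A‖ * ‖x‖ ^ 2 := by ring
  have hxpos : (0 : ℝ) < ‖x‖ ^ 2 := pow_pos (norm_pos_iff.mpr hxne) 2
  have hfinal : nu k * ‖x‖ ^ 2 ≤ (mu k + ‖B - A‖) * ‖x‖ ^ 2 := by nlinarith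
  exact le_of_mul_le_mul_right (by linarith [hfinal]) hxpos

end WeylSection

set_option maxHeartbeats 1000000 in
/-- **Lemma 3, part 2** (Bosq, Lemma 4.3): if `Q` has simple eigenvalues
`λ₁ > λ₂ > ⋯ > 0` with unit eigenvectors `(v_k)`, and `Q̂` has eigenpairs `(λ̂_k, v̂_k)`
with `λ̂₁ ≥ λ̂₂ ≥ ⋯`, then with `v_k' = sgn⟪v̂_k, v_k⟫ · v_k`,
`‖v̂_k − v_k'‖ ≤ τ_k ‖Q̂ − Q‖` for every `k`. -/
theorem stmt_5
    {H : Type*} [NormedAddCommGroup H] [InnerProductSpace ℝ H] [CompleteSpace H]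
    [SecondCountableTopology H]
    (Q Qh : H →L[ℝ] H)
    (hQ_sa : IsSelfAdjoint Q) (hQh_sa : IsSelfAdjoint Qh)
    (hQ_nn : ∀ x : H, 0 ≤ ⟪x, Q x⟫) (hQh_nn : ∀ x : H, 0 ≤ ⟪x, Qh x⟫)
    (hQ_cpt : IsCompactOperator fun x => Q x) (hQh_cpt : IsCompactOperator fun x => Qh x)
    -- spectral representation of `Q`, with simple eigenvalues `λ₁ > λ₂ > ⋯ > 0`
    (lam : ℕ → ℝ) (v : ℕ → H) (hv : Orthonormal ℝ v)
    (hlam_anti : StrictAnti lam) (hlam_pos : ∀ k, 0 < lam k)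
    (hQ_rep : ∀ x : H, Q x = ∑' k, lam k • (⟪v k, x⟫ • v k))
    -- spectral representation of `Q̂`, eigenvalues in decreasing order
    (lamh : ℕ → ℝ) (vh : ℕ → H) (hvh : Orthonormal ℝ vh)
    (hlamh_anti : Antitone lamh) (hlamh_nn : ∀ k, 0 ≤ lamh k)
    (hQh_rep : ∀ x : H, Qh x = ∑' k, lamh k • (⟪vh k, x⟫ • vh k)) :
    ∀ k, ‖vh k - Real.sign ⟪vh k, v k⟫ • v k‖ ≤ tauGap lam k * ‖Qh - Q‖ := by
  intro k
  have hlam_antitone : Antitone lam := hlam_anti.antitone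
  have hlam_nn : ∀ j, 0 ≤ lam j := fun j => (hlam_pos j).le
  have hCl : ∀ j, |lam j| ≤ lam 0 := fun j => by
    rw [abs_of_nonneg (hlam_nn j)]; exact hlam_antitone (Nat.zero_le j)
  set δ := ‖Qh - Q‖ with hδdef
  have hδ0 : (0:ℝ) ≤ δ := norm_nonneg _
  have hweyl1 : lamh k ≤ lam k + δ :=
    weyl hv hvh hlam_antitone hlam_nn hlamh_anti hlamh_nn hQ_rep hQh_rep k
  have hweyl2 : lam k ≤ lamh k + δ := by
    have h := weyl hvh hv hlamh_anti hlamh_nn hlam_antitone hlam_nn hQh_rep hQ_rep k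
    rwa [norm_sub_rev] at h
  -- the spectral gap α
  obtain ⟨α, hα1, hα2, hα3, hαpos⟩ :
      ∃ α : ℝ, α ≤ lam k - lam (k+1) ∧ (∀ j, j < k → α ≤ lam j - lam k) ∧
        tauGap lam k = 2 * Real.sqrt 2 * α⁻¹ ∧ 0 < α := by
    cases k with
    | zero =>
      exact ⟨lam 0 - lam 1, le_refl _, fun j hj => absurd hj (Nat.not_lt_zero j), rfl,
        sub_pos.mpr (hlam_anti (Nat.lt_succ_self 0))⟩
    | succ n =>
      have ha : 0 < lam n - lam (n+1) := sub_pos.mpr (hlam_anti (Nat.lt_succ_self n))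
      have hb : 0 < lam (n+1) - lam (n+2) := sub_pos.mpr (hlam_anti (Nat.lt_succ_self (n+1)))
      refine ⟨min (lam n - lam (n+1)) (lam (n+1) - lam (n+2)), min_le_right _ _, ?_, ?_,
        lt_min ha hb⟩
      · intro j hj
        have hj' : j ≤ n := Nat.lt_succ_iff.mp hj
        have h1 := hlam_antitone hj'
        calc min (lam n - lam (n+1)) (lam (n+1) - lam (n+2)) ≤ lam n - lam (n+1) :=
              min_le_left _ _
          _ ≤ lam j - lam (n+1) := by linarith
      · show tauGap lam (n+1) = _
        have hunfold : tauGap lam (n+1)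
            = 2 * Real.sqrt 2 * max ((lam n - lam (n+1))⁻¹) ((lam (n+1) - lam (n+2))⁻¹) := rfl
        rw [hunfold]
        congr 1
        rcases le_total (lam n - lam (n+1)) (lam (n+1) - lam (n+2)) with h | h
        · rw [min_eq_left h, max_eq_left (inv_anti₀ ha h)]
        · rw [min_eq_right h, max_eq_right (inv_anti₀ hb h)]
  have hαlam : α ≤ lam k := by have := hlam_pos (k+1); linarith
  -- coefficients of vh k in the eigenbasis of Q
  set c : ℕ → ℝ := fun j => ⟪v j, vh k⟫ with hc
  have hvhk1 : ‖vh k‖ = 1 := hvh.1 k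
  have hsc : Summable fun j => c j ^ 2 := sum_c_sq hv (vh k)
  have hS1 : (∑' j, c j ^ 2) ≤ 1 := by
    have h := bessel hv (vh k); rwa [hvhk1, one_pow] at h
  have hsl : Summable fun j => lam j * c j ^ 2 :=
    Summable.of_nonneg_of_le (fun j => mul_nonneg (hlam_nn j) (sq_nonneg _))
      (fun j => mul_le_mul_of_nonneg_right (hlam_antitone (Nat.zero_le j)) (sq_nonneg _))
      (hsc.mul_left (lam 0))
  have hsl2 : Summable fun j => lam j ^ 2 * c j ^ 2 :=
    Summable.of_nonneg_of_le (fun j => mul_nonneg (sq_nonneg _) (sq_nonneg _))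
      (fun j => mul_le_mul_of_nonneg_right
        (pow_le_pow_left₀ (hlam_nn j) (hlam_antitone (Nat.zero_le j)) 2) (sq_nonneg _))
      (hsc.mul_left (lam 0 ^ 2))
  have hq_vhk : Q (vh k) = ∑' j, (lam j * c j) • v j := rep_eq hv hCl (hQ_rep (vh k))
  have hsumvec : Summable fun j => (lam j * c j) • v j := rep_summable hv hCl (vh k)
  have hvkvk : ⟪vh k, vh k⟫ = (1:ℝ) := by
    rw [real_inner_self_eq_norm_sq, hvhk1]; norm_num
  have hQhvh : Qh (vh k) = lamh k • vh k := by
    rw [hQh_rep (vh k),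
      tsum_eq_single k (fun j hj => by rw [hvh.2 hj, zero_smul, smul_zero]),
      hvkvk, one_smul]
  set y : H := Qh (vh k) - Q (vh k) with hy
  have hynorm : ‖y‖ ≤ δ := by
    have h1 : y = (Qh - Q) (vh k) := by rw [hy, ContinuousLinearMap.sub_apply]
    rw [h1]
    calc ‖(Qh - Q) (vh k)‖ ≤ ‖Qh - Q‖ * ‖vh k‖ := (Qh - Q).le_opNorm _
      _ = δ := by rw [hvhk1, mul_one]
  have hqq : ⟪vh k, Q (vh k)⟫ = ∑' j, lam j * c j ^ 2 := rep_quad hv hCl (hQ_rep (vh k))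
  have hyj : ∀ j, ⟪y, v j⟫ = (lamh k - lam j) * c j := by
    intro j
    rw [hy, inner_sub_left, hQhvh, real_inner_smul_left]
    have h2 : ⟪Q (vh k), v j⟫ = lam j * c j := by
      rw [real_inner_comm]; exact rep_coeff hv hCl (hQ_rep (vh k)) j
    have h3 : ⟪vh k, v j⟫ = c j := real_inner_comm (v j) (vh k)
    rw [h2, h3]; ring
  have hyQ : ⟪y, Q (vh k)⟫
      = lamh k * (∑' j, lam j * c j ^ 2) - ∑' j, lam j ^ 2 * c j ^ 2 := by
    have h1 : ⟪y, Q (vh k)⟫ = ∑' j, (lam j * c j) * ⟪y, v j⟫ := by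
      conv_lhs => rw [hq_vhk]
      have h := (innerSL ℝ y).map_tsum hsumvec
      simpa [innerSL_apply_apply, real_inner_smul_right] using h
    rw [h1]
    have h2 : (fun j => (lam j * c j) * ⟪y, v j⟫)
        = fun j => lamh k * (lam j * c j ^ 2) - lam j ^ 2 * c j ^ 2 := by
      funext j; rw [hyj j]; ring
    rw [h2, Summable.tsum_sub (hsl.mul_left (lamh k)) hsl2, tsum_mul_left]
  have hyvh : ⟪y, vh k⟫ = lamh k - ∑' j, lam j * c j ^ 2 := by
    rw [hy, inner_sub_left, hQhvh, real_inner_smul_left, hvkvk]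
    have h2 : ⟪Q (vh k), vh k⟫ = ∑' j, lam j * c j ^ 2 := by
      rw [real_inner_comm]; exact hqq
    rw [h2]; ring
  have hy2 : ‖y‖ ^ 2 = lamh k ^ 2 - 2 * lamh k * (∑' j, lam j * c j ^ 2)
      + ∑' j, lam j ^ 2 * c j ^ 2 := by
    rw [← real_inner_self_eq_norm_sq]
    nth_rewrite 2 [hy]
    rw [inner_sub_right, hQhvh, real_inner_smul_right, hyvh, hyQ]
    ring
  have hsd : Summable fun j => (lamh k - lam j) ^ 2 * c j ^ 2 := by
    refine Summable.of_nonneg_of_le (fun j => mul_nonneg (sq_nonneg _) (sq_nonneg _))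
      (fun j => ?_) (hsc.mul_left ((lamh k + lam 0) ^ 2))
    refine mul_le_mul_of_nonneg_right ?_ (sq_nonneg _)
    have h1 : |lamh k - lam j| ≤ lamh k + lam 0 := by
      rw [abs_le]
      constructor <;> [skip; skip] <;>
        nlinarith [hlamh_nn k, hlam_nn j, hlam_antitone (Nat.zero_le j), hlam_pos 0]
    calc (lamh k - lam j) ^ 2 = |lamh k - lam j| ^ 2 := (sq_abs _).symm
      _ ≤ (lamh k + lam 0) ^ 2 := pow_le_pow_left₀ (abs_nonneg _) h1 2
  have hkey : ‖y‖ ^ 2 = lamh k ^ 2 * (1 - ∑' j, c j ^ 2)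
      + ∑' j, (lamh k - lam j) ^ 2 * c j ^ 2 := by
    have h2 : (fun j => (lamh k - lam j) ^ 2 * c j ^ 2)
        = fun j => (lamh k ^ 2 * c j ^ 2 - (2 * lamh k) * (lam j * c j ^ 2))
          + lam j ^ 2 * c j ^ 2 := by
      funext j; ring
    rw [hy2, h2, Summable.tsum_add (Summable.sub (hsc.mul_left _) (hsl.mul_left _)) hsl2,
      Summable.tsum_sub (hsc.mul_left _) (hsl.mul_left _), tsum_mul_left, tsum_mul_left]
    ring
  -- the norm-squared bound in terms of the inner product
  have hns : ‖vh k - Real.sign ⟪vh k, v k⟫ • v k‖ ^ 2 ≤ 2 * (1 - c k ^ 2) := by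
    have h := norm_sub_sign_sq_le hvhk1 (hv.1 k)
    have hck : ⟪vh k, v k⟫ = c k := real_inner_comm (v k) (vh k)
    rw [show (⟪vh k, v k⟫ : ℝ) ^ 2 = c k ^ 2 from by rw [hck]] at h
    exact h
  have htau0 : 0 ≤ tauGap lam k * δ := by
    rw [hα3]
    have : (0:ℝ) ≤ α⁻¹ := inv_nonneg.mpr hαpos.le
    positivity
  have h8 : (tauGap lam k * δ) ^ 2 = 8 * α⁻¹ ^ 2 * δ ^ 2 := by
    rw [hα3, show (2 * Real.sqrt 2 * α⁻¹ * δ) ^ 2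
        = 2 ^ 2 * Real.sqrt 2 ^ 2 * α⁻¹ ^ 2 * δ ^ 2 from by ring,
      Real.sq_sqrt (by norm_num : (0:ℝ) ≤ 2)]
    ring
  have hαne : α ≠ 0 := ne_of_gt hαpos
  suffices hbig : ‖vh k - Real.sign ⟪vh k, v k⟫ • v k‖ ^ 2 ≤ (tauGap lam k * δ) ^ 2 by
    calc ‖vh k - Real.sign ⟪vh k, v k⟫ • v k‖
        = Real.sqrt (‖vh k - Real.sign ⟪vh k, v k⟫ • v k‖ ^ 2) :=
          (Real.sqrt_sq (norm_nonneg _)).symm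
      _ ≤ Real.sqrt ((tauGap lam k * δ) ^ 2) := Real.sqrt_le_sqrt hbig
      _ = tauGap lam k * δ := Real.sqrt_sq htau0
  by_cases hcase : δ < α / 2
  · -- small-perturbation case
    have hwk1 : lamh k ≤ lam k + α / 2 := by linarith
    have hwk2 : lam k - α / 2 ≤ lamh k := by linarith
    have hterm : ∀ j, j ≠ k → (α/2) ^ 2 * c j ^ 2 ≤ (lamh k - lam j) ^ 2 * c j ^ 2 := by
      intro j hj
      refine mul_le_mul_of_nonneg_right ?_ (sq_nonneg _)
      have habs : α / 2 ≤ |lamh k - lam j| := by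
        rcases lt_or_gt_of_ne hj with h | h
        · have h1 := hα2 j h
          refine le_abs.mpr (Or.inr ?_)
          linarith
        · have h2 : lam j ≤ lam (k+1) := hlam_antitone h
          refine le_abs.mpr (Or.inl ?_)
          linarith
      calc (α/2) ^ 2 ≤ |lamh k - lam j| ^ 2 := pow_le_pow_left₀ (by linarith) habs 2
        _ = (lamh k - lam j) ^ 2 := sq_abs _
    have hlk : (α/2) ^ 2 ≤ lamh k ^ 2 := by
      have h1 : α / 2 ≤ lamh k := by linarith
      exact pow_le_pow_left₀ (by linarith) h1 2
    have hind : Summable fun j => (if j = k then (α/2) ^ 2 * c k ^ 2 else (0:ℝ)) := by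
      apply summable_of_ne_finset_zero (s := {k})
      intro j hj
      rw [if_neg (by simpa using hj)]
    have hindval : ∑' j, (if j = k then (α/2) ^ 2 * c k ^ 2 else (0:ℝ))
        = (α/2) ^ 2 * c k ^ 2 := tsum_ite_eq k _
    have hgeq : (fun j => (if j = k then (0:ℝ) else (α/2) ^ 2 * c j ^ 2))
        = fun j => (α/2) ^ 2 * c j ^ 2 - (if j = k then (α/2) ^ 2 * c k ^ 2 else 0) := by
      funext j; by_cases h : j = k <;> simp [h]
    have hgsum : Summable (fun j => if j = k then (0:ℝ) else (α/2) ^ 2 * c j ^ 2) := by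
      rw [hgeq]; exact (hsc.mul_left _).sub hind
    have hgval : ∑' j, (if j = k then (0:ℝ) else (α/2) ^ 2 * c j ^ 2)
        = (α/2) ^ 2 * (∑' j, c j ^ 2) - (α/2) ^ 2 * c k ^ 2 := by
      rw [hgeq, Summable.tsum_sub (hsc.mul_left _) hind, tsum_mul_left, hindval]
    have hbound2 : (α/2) ^ 2 * (∑' j, c j ^ 2) - (α/2) ^ 2 * c k ^ 2
        ≤ ∑' j, (lamh k - lam j) ^ 2 * c j ^ 2 := by
      rw [← hgval]
      refine Summable.tsum_le_tsum (fun j => ?_) hgsum hsd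
      by_cases hjk : j = k
      · rw [if_pos hjk]; positivity
      · rw [if_neg hjk]; exact hterm j hjk
    have hmul : (α/2) ^ 2 * (1 - ∑' j, c j ^ 2) ≤ lamh k ^ 2 * (1 - ∑' j, c j ^ 2) :=
      mul_le_mul_of_nonneg_right hlk (by linarith)
    have hy2le : ‖y‖ ^ 2 ≤ δ ^ 2 := pow_le_pow_left₀ (norm_nonneg y) hynorm 2
    have hfinal : (α/2) ^ 2 * (1 - c k ^ 2) ≤ δ ^ 2 := by
      have hring : (α/2) ^ 2 * (1 - c k ^ 2)
          = (α/2) ^ 2 * (1 - ∑' j, c j ^ 2)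
            + ((α/2) ^ 2 * (∑' j, c j ^ 2) - (α/2) ^ 2 * c k ^ 2) := by ring
      rw [hring]
      linarith [hkey, hmul, hbound2, hy2le]
    rw [h8]
    have heq : 8 * α⁻¹ ^ 2 * ((α/2) ^ 2 * (1 - c k ^ 2)) = 2 * (1 - c k ^ 2) := by
      field_simp
      ring
    have h9 : (0:ℝ) ≤ 8 * α⁻¹ ^ 2 := by positivity
    have h10 := mul_le_mul_of_nonneg_left hfinal h9
    rw [heq] at h10
    linarith
  · -- large-perturbation case
    push_neg at hcase
    have h2 : ‖vh k - Real.sign ⟪vh k, v k⟫ • v k‖ ^ 2 ≤ 2 := by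
      linarith [hns, sq_nonneg (c k)]
    rw [h8]
    have hδ2 : (α/2) ^ 2 ≤ δ ^ 2 := pow_le_pow_left₀ (by linarith) hcase 2
    have heq : 8 * α⁻¹ ^ 2 * (α/2) ^ 2 = 2 := by
      field_simp
      ring
    have h9 : (0:ℝ) ≤ 8 * α⁻¹ ^ 2 := by positivity
    have h10 := mul_le_mul_of_nonneg_left hδ2 h9
    rw [heq] at h10
    linarith
end

section
/- In the setting of the preceding ARCH reduction, suppose additionally that the adjoint A* satisfies ⟨A*Π ι₁, w⟩ = α₁·⟨ι₁, w⟩ + α₂·⟨ι₂, w⟩ for all w ∈ H, where ι₁(x) = x and ι₂(x) = x² and α ≠ 0. Then ⟨ι₁, w_t⟩ = β₁·⟨ι₁, w_{t−1}⟩ + β₂·E(⟨ι₂, w_t⟩ | F_{t−1}) + ⟨ι₁, ε_t⟩ almost surely, where β₁ = α₁ and β₂ = α₂/α. -/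
open MeasureTheory Filter
open scoped RealInnerProductSpace

/-- **ARCH-M reduction** (Section 2.1 of the paper): in the setting of the ARCH
reduction, if in addition `⟪A*Πι₁, w⟫ = α₁ ⟪ι₁, w⟫ + α₂ ⟪ι₂, w⟫` for all `w ∈ H`, then
`⟪ι₁, w_t⟫ = β₁ ⟪ι₁, w_{t−1}⟫ + β₂ E(⟪ι₂, w_t⟫ | F_{t−1}) + ⟪ι₁, ε_t⟫` a.s., where
`β₁ = α₁` and `β₂ = α₂/α`. -/
theorem stmt_16
    (a b : ℝ) (hab : a < b)
    -- the ambient space `L²(C)` with `C = [a, b]`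
    (one ι₁ ι₂ : Lp ℝ 2 (MeasureTheory.volume.restrict (Set.Icc a b)))
    (hone : ∀ᵐ x ∂(MeasureTheory.volume.restrict (Set.Icc a b)), one x = 1)
    (hι₁ : ∀ᵐ x ∂(MeasureTheory.volume.restrict (Set.Icc a b)), ι₁ x = x)
    (hι₂ : ∀ᵐ x ∂(MeasureTheory.volume.restrict (Set.Icc a b)), ι₂ x = x ^ 2)
    -- `H = {v : ⟪1, v⟫ = 0}`, the orthogonal complement of the constants
    {Ω : Type*} [MeasurableSpace Ω] (μ : Measure Ω) [IsProbabilityMeasure μ]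
    (A : (ℝ ∙ one)ᗮ →L[ℝ] ↥(ℝ ∙ one)ᗮ)
    (w ε : ℤ → Ω → ↥(ℝ ∙ one)ᗮ)
    (hw_meas : ∀ t, MeasurableSpace.comap (w t) (borel ↥(ℝ ∙ one)ᗮ)
        ≤ ‹MeasurableSpace Ω›)
    (hε_meas : ∀ t, MeasurableSpace.comap (ε t) (borel ↥(ℝ ∙ one)ᗮ)
        ≤ ‹MeasurableSpace Ω›)
    -- `(ε_t)` i.i.d., mean zero, square integrable
    (hε_indep : ProbabilityTheory.iIndepFun (m := fun _ => borel ↥(ℝ ∙ one)ᗮ) ε μ)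
    (hε_ident : ∀ s t : ℤ, ∀ B : Set ↥(ℝ ∙ one)ᗮ, MeasurableSet[borel ↥(ℝ ∙ one)ᗮ] B →
        μ (ε s ⁻¹' B) = μ (ε t ⁻¹' B))
    (hε_mean : ∀ t, ∫ ω, ε t ω ∂μ = 0)
    (hε_L2 : ∀ t, Integrable (fun ω => ‖ε t ω‖ ^ 2) μ)
    -- `ε_t` independent of `F_{t−1} = σ(w_s : s ≤ t−1)`
    (hε_indep_past : ∀ t : ℤ, ProbabilityTheory.Indep
        (⨆ s : {s : ℤ // s ≤ t - 1}, MeasurableSpace.comap (w s.1) (borel ↥(ℝ ∙ one)ᗮ))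
        (MeasurableSpace.comap (ε t) (borel ↥(ℝ ∙ one)ᗮ)) μ)
    -- the FAR(1) model
    (hmodel : ∀ t : ℤ, ∀ᵐ ω ∂μ, w t ω = A (w (t - 1) ω) + ε t ω)
    -- integrability of `⟪ι₂, w_t⟫`
    (hw_int : ∀ t, Integrable (fun ω => ⟪ι₂, ((w t ω : ↥(ℝ ∙ one)ᗮ) : Lp ℝ 2
        (MeasureTheory.volume.restrict (Set.Icc a b)))⟫) μ)
    -- `⟪A*Πι₂, w⟫ = α ⟪ι₂, w⟫` for all `w ∈ H`, i.e. `⟪ι₂, A w⟫ = α ⟪ι₂, w⟫`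
    (α : ℝ) (hα₀ : 0 < α) (hα₁ : α < 1)
    (hAadj : ∀ v : ↥(ℝ ∙ one)ᗮ,
        ⟪ι₂, ((A v : ↥(ℝ ∙ one)ᗮ) : Lp ℝ 2 (MeasureTheory.volume.restrict (Set.Icc a b)))⟫
          = α * ⟪ι₂, ((v : ↥(ℝ ∙ one)ᗮ) : Lp ℝ 2
              (MeasureTheory.volume.restrict (Set.Icc a b)))⟫)
    -- `⟪A*Πι₁, w⟫ = α₁ ⟪ι₁, w⟫ + α₂ ⟪ι₂, w⟫` for all `w ∈ H`
    (α₁ α₂ : ℝ)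
    (hAadj₁ : ∀ v : ↥(ℝ ∙ one)ᗮ,
        ⟪ι₁, ((A v : ↥(ℝ ∙ one)ᗮ) : Lp ℝ 2 (MeasureTheory.volume.restrict (Set.Icc a b)))⟫
          = α₁ * ⟪ι₁, ((v : ↥(ℝ ∙ one)ᗮ) : Lp ℝ 2
              (MeasureTheory.volume.restrict (Set.Icc a b)))⟫
            + α₂ * ⟪ι₂, ((v : ↥(ℝ ∙ one)ᗮ) : Lp ℝ 2
              (MeasureTheory.volume.restrict (Set.Icc a b)))⟫) :
    ∀ t : ℤ, ∀ᵐ ω ∂μ,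
      ⟪ι₁, ((w t ω : ↥(ℝ ∙ one)ᗮ) : Lp ℝ 2
          (MeasureTheory.volume.restrict (Set.Icc a b)))⟫
        = α₁ * ⟪ι₁, ((w (t - 1) ω : ↥(ℝ ∙ one)ᗮ) : Lp ℝ 2
            (MeasureTheory.volume.restrict (Set.Icc a b)))⟫
          + (α₂ / α) *
            ((μ[(fun ω' => ⟪ι₂, ((w t ω' : ↥(ℝ ∙ one)ᗮ) : Lp ℝ 2
                  (MeasureTheory.volume.restrict (Set.Icc a b)))⟫) |
                (⨆ s : {s : ℤ // s ≤ t - 1},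
                  MeasurableSpace.comap (w s.1) (borel ↥(ℝ ∙ one)ᗮ))]) ω)
          + ⟪ι₁, ((ε t ω : ↥(ℝ ∙ one)ᗮ) : Lp ℝ 2
              (MeasureTheory.volume.restrict (Set.Icc a b)))⟫ := by
  intro t
  haveI : Fact ((2:ENNReal) ≠ ⊤) := ⟨by norm_num⟩
  haveI : SecondCountableTopology (Lp ℝ 2 (MeasureTheory.volume.restrict (Set.Icc a b))) :=
    Lp.SecondCountableTopology
  letI mE : MeasurableSpace ↥(ℝ ∙ one)ᗮ := borel _
  haveI : BorelSpace ↥(ℝ ∙ one)ᗮ := ⟨rfl⟩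
  have hmF : (⨆ s : {s : ℤ // s ≤ t - 1},
      MeasurableSpace.comap (w s.1) (borel ↥(ℝ ∙ one)ᗮ)) ≤ ‹MeasurableSpace Ω› :=
    iSup_le fun s => hw_meas s.1
  haveI : SigmaFinite (μ.trim hmF) := by infer_instance
  -- the continuous linear functional `v ↦ ⟪ι₂, ↑v⟫`
  set L₂ : ↥(ℝ ∙ one)ᗮ →L[ℝ] ℝ := (innerSL ℝ ι₂).comp (Submodule.subtypeL _) with hL₂_def
  have hL₂ : ∀ v : ↥(ℝ ∙ one)ᗮ, L₂ v = ⟪ι₂, (v : Lp ℝ 2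
      (MeasureTheory.volume.restrict (Set.Icc a b)))⟫ := fun v => rfl
  -- measurability
  have hwm : Measurable[⨆ s : {s : ℤ // s ≤ t - 1},
      MeasurableSpace.comap (w s.1) (borel ↥(ℝ ∙ one)ᗮ)] (w (t - 1)) := by
    rw [measurable_iff_comap_le]
    exact le_iSup (fun s : {s : ℤ // s ≤ t - 1} =>
      MeasurableSpace.comap (w s.1) (borel ↥(ℝ ∙ one)ᗮ)) ⟨t - 1, le_refl _⟩
  have hg_sm : StronglyMeasurable[⨆ s : {s : ℤ // s ≤ t - 1},
      MeasurableSpace.comap (w s.1) (borel ↥(ℝ ∙ one)ᗮ)]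
      (fun ω => α * ⟪ι₂, ((w (t - 1) ω : ↥(ℝ ∙ one)ᗮ) : Lp ℝ 2
        (MeasureTheory.volume.restrict (Set.Icc a b)))⟫) :=
    (measurable_const.mul (L₂.continuous.measurable.comp hwm)).stronglyMeasurable
  have hεm : Measurable (ε t) := measurable_iff_comap_le.2 (hε_meas t)
  have hε_sm : StronglyMeasurable[MeasurableSpace.comap (ε t) (borel ↥(ℝ ∙ one)ᗮ)]
      (fun ω => ⟪ι₂, ((ε t ω : ↥(ℝ ∙ one)ᗮ) : Lp ℝ 2
        (MeasureTheory.volume.restrict (Set.Icc a b)))⟫) :=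
    (L₂.continuous.measurable.comp (measurable_iff_comap_le.2 le_rfl)).stronglyMeasurable
  -- integrability
  have hbound : ∀ ω, ‖ε t ω‖ ≤ 1 + ‖ε t ω‖ ^ 2 := by
    intro ω; nlinarith [sq_nonneg (‖ε t ω‖ - 1)]
  have hone_int : Integrable (fun ω => 1 + ‖ε t ω‖ ^ 2) μ :=
    (integrable_const (1:ℝ)).add (hε_L2 t)
  have hε_asm : AEStronglyMeasurable (ε t) μ :=
    hεm.stronglyMeasurable.aestronglyMeasurable
  have hε_int : Integrable (ε t) μ := by
    refine Integrable.mono' hone_int hε_asm ?_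
    filter_upwards with ω using hbound ω
  have hεf_m : Measurable (fun ω => ⟪ι₂, ((ε t ω : ↥(ℝ ∙ one)ᗮ) : Lp ℝ 2
      (MeasureTheory.volume.restrict (Set.Icc a b)))⟫) :=
    L₂.continuous.measurable.comp hεm
  have hεf_int : Integrable (fun ω => ⟪ι₂, ((ε t ω : ↥(ℝ ∙ one)ᗮ) : Lp ℝ 2
      (MeasureTheory.volume.restrict (Set.Icc a b)))⟫) μ := by
    refine Integrable.mono' (hone_int.const_mul ‖ι₂‖)
      hεf_m.stronglyMeasurable.aestronglyMeasurable ?_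
    filter_upwards with ω
    calc ‖⟪ι₂, ((ε t ω : ↥(ℝ ∙ one)ᗮ) : Lp ℝ 2
        (MeasureTheory.volume.restrict (Set.Icc a b)))⟫‖
        ≤ ‖ι₂‖ * ‖((ε t ω : ↥(ℝ ∙ one)ᗮ) : Lp ℝ 2
          (MeasureTheory.volume.restrict (Set.Icc a b)))‖ := norm_inner_le_norm _ _
      _ = ‖ι₂‖ * ‖ε t ω‖ := rfl
      _ ≤ ‖ι₂‖ * (1 + ‖ε t ω‖ ^ 2) :=
          mul_le_mul_of_nonneg_left (hbound ω) (norm_nonneg _)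
  -- mean zero
  have hmean : ∫ ω, ⟪ι₂, ((ε t ω : ↥(ℝ ∙ one)ᗮ) : Lp ℝ 2
      (MeasureTheory.volume.restrict (Set.Icc a b)))⟫ ∂μ = 0 := by
    have h := L₂.integral_comp_comm hε_int
    rw [hε_mean t, map_zero] at h
    simpa [hL₂] using h
  -- the model equation in terms of `⟪ι₂, ·⟫`
  have hmodel₂ : (fun ω => ⟪ι₂, ((w t ω : ↥(ℝ ∙ one)ᗮ) : Lp ℝ 2
      (MeasureTheory.volume.restrict (Set.Icc a b)))⟫)
      =ᵐ[μ] (fun ω => α * ⟪ι₂, ((w (t - 1) ω : ↥(ℝ ∙ one)ᗮ) : Lp ℝ 2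
        (MeasureTheory.volume.restrict (Set.Icc a b)))⟫
        + ⟪ι₂, ((ε t ω : ↥(ℝ ∙ one)ᗮ) : Lp ℝ 2
          (MeasureTheory.volume.restrict (Set.Icc a b)))⟫) := by
    filter_upwards [hmodel t] with ω hω
    rw [hω, Submodule.coe_add, inner_add_right, hAadj]
  -- conditional expectation computation
  have hcond₁ := condExp_congr_ae (m := ⨆ s : {s : ℤ // s ≤ t - 1},
      MeasurableSpace.comap (w s.1) (borel ↥(ℝ ∙ one)ᗮ)) hmodel₂
  have hcond₂ : μ[(fun ω => α * ⟪ι₂, ((w (t - 1) ω : ↥(ℝ ∙ one)ᗮ) : Lp ℝ 2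
        (MeasureTheory.volume.restrict (Set.Icc a b)))⟫
        + ⟪ι₂, ((ε t ω : ↥(ℝ ∙ one)ᗮ) : Lp ℝ 2
          (MeasureTheory.volume.restrict (Set.Icc a b)))⟫) | ⨆ s : {s : ℤ // s ≤ t - 1},
            MeasurableSpace.comap (w s.1) (borel ↥(ℝ ∙ one)ᗮ)]
      =ᵐ[μ] (μ[(fun ω => α * ⟪ι₂, ((w (t - 1) ω : ↥(ℝ ∙ one)ᗮ) : Lp ℝ 2
        (MeasureTheory.volume.restrict (Set.Icc a b)))⟫) | ⨆ s : {s : ℤ // s ≤ t - 1},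
          MeasurableSpace.comap (w s.1) (borel ↥(ℝ ∙ one)ᗮ)])
        + (μ[(fun ω => ⟪ι₂, ((ε t ω : ↥(ℝ ∙ one)ᗮ) : Lp ℝ 2
          (MeasureTheory.volume.restrict (Set.Icc a b)))⟫) | ⨆ s : {s : ℤ // s ≤ t - 1},
            MeasurableSpace.comap (w s.1) (borel ↥(ℝ ∙ one)ᗮ)]) :=
    condExp_add ((hw_int (t - 1)).const_mul α) hεf_int _
  have hcond₃ : μ[(fun ω => α * ⟪ι₂, ((w (t - 1) ω : ↥(ℝ ∙ one)ᗮ) : Lp ℝ 2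
        (MeasureTheory.volume.restrict (Set.Icc a b)))⟫) | ⨆ s : {s : ℤ // s ≤ t - 1},
          MeasurableSpace.comap (w s.1) (borel ↥(ℝ ∙ one)ᗮ)]
      = fun ω => α * ⟪ι₂, ((w (t - 1) ω : ↥(ℝ ∙ one)ᗮ) : Lp ℝ 2
        (MeasureTheory.volume.restrict (Set.Icc a b)))⟫ :=
    condExp_of_stronglyMeasurable hmF hg_sm ((hw_int (t - 1)).const_mul α)
  have hcond₄ : μ[(fun ω => ⟪ι₂, ((ε t ω : ↥(ℝ ∙ one)ᗮ) : Lp ℝ 2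
        (MeasureTheory.volume.restrict (Set.Icc a b)))⟫) | ⨆ s : {s : ℤ // s ≤ t - 1},
          MeasurableSpace.comap (w s.1) (borel ↥(ℝ ∙ one)ᗮ)]
      =ᵐ[μ] fun _ => (0:ℝ) := by
    have h := MeasureTheory.condExp_indep_eq (hε_meas t) hmF hε_sm (hε_indep_past t).symm
    rw [hmean] at h
    exact h
  have hkey : μ[(fun ω => ⟪ι₂, ((w t ω : ↥(ℝ ∙ one)ᗮ) : Lp ℝ 2
      (MeasureTheory.volume.restrict (Set.Icc a b)))⟫) | ⨆ s : {s : ℤ // s ≤ t - 1},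
        MeasurableSpace.comap (w s.1) (borel ↥(ℝ ∙ one)ᗮ)]
      =ᵐ[μ] fun ω => α * ⟪ι₂, ((w (t - 1) ω : ↥(ℝ ∙ one)ᗮ) : Lp ℝ 2
        (MeasureTheory.volume.restrict (Set.Icc a b)))⟫ := by
    refine hcond₁.trans (hcond₂.trans ?_)
    rw [hcond₃]
    filter_upwards [hcond₄] with ω hω
    simp [hω]
  -- conclusion
  filter_upwards [hmodel t, hkey] with ω h₁ h₂
  rw [h₂, h₁, Submodule.coe_add, inner_add_right, hAadj₁]
  field_simp
end
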